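/- arXiv:2108.03368 — 8 statements merged into one kernel-verified Lean document; each statement's English description precedes it below -/
import Mathlib

section
/- Let G = (V, E) be a finite connected simple graph whose vertex set is partitioned into blocks of exactly 3 vertices, each block pairwise adjacent in G (a '3-loop graph'), and suppose there are at least 2 blocks. Consider N robots with N < |V|, a configuration being an injective map f : Fin N → V. A single move transforms f into g where either (vacant move) there is an index i and an edge {f(i), v} ∈ E with v not in the range of f, g(i) = v, and g(k) = f(k) for all k ≠ i; or (cyclic move) there is a block {a, b, c} with all three vertices in the range of f, and the robots at a, b, c move to b, c, a respectively (or to c, a, b respectively), all other robots fixed. Then for every injective configuration f : Fin N → V and every permutation σ of Fin N, the configuration f ∘ σ is reachable from f by a finite sequence of moves. -/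
/-- A vacant move: some robot `i` moves along an edge of `G` to a vertex `v` not occupied
by any robot; all other robots stay fixed. -/
def VacantMove {V : Type*} (G : SimpleGraph V) {N : ℕ} (f g : Fin N → V) : Prop :=
  ∃ (i : Fin N) (v : V), G.Adj (f i) v ∧ (∀ k, f k ≠ v) ∧
    g i = v ∧ ∀ k, k ≠ i → g k = f k

/-- A cyclic move: three robots occupying all three vertices of a block cyclically
rotate (in either direction); all other robots stay fixed. -/
def CyclicMove {V : Type*} [DecidableEq V] (blocks : Finset (Finset V)) {N : ℕ}
    (f g : Fin N → V) : Prop :=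
  ∃ i j k : Fin N, i ≠ j ∧ j ≠ k ∧ i ≠ k ∧
    ({f i, f j, f k} : Finset V) ∈ blocks ∧
    ((g i = f j ∧ g j = f k ∧ g k = f i) ∨
     (g i = f k ∧ g j = f i ∧ g k = f j)) ∧
    ∀ l, l ≠ i → l ≠ j → l ≠ k → g l = f l

/-- A single move is either a vacant move or a cyclic move. -/
def Move {V : Type*} [DecidableEq V] (G : SimpleGraph V) (blocks : Finset (Finset V))
    {N : ℕ} (f g : Fin N → V) : Prop :=
  VacantMove G f g ∨ CyclicMove blocks f g

set_option linter.unusedSectionVars false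

namespace MPP3

variable {V : Type*} [DecidableEq V] {N : ℕ}
variable {G : SimpleGraph V} {blocks : Finset (Finset V)}

/-- Reachability. -/
abbrev Reach (G : SimpleGraph V) (blocks : Finset (Finset V)) (f g : Fin N → V) : Prop :=
  Relation.ReflTransGen (Move G blocks) f g

lemma mv {f : Fin N → V} {i : Fin N} {v : V} (ha : G.Adj (f i) v) (hv : ∀ k, f k ≠ v) :
    Move G blocks f (Function.update f i v) :=
  Or.inl ⟨i, v, ha, hv, by simp, fun k hk => Function.update_of_ne hk _ _⟩

lemma upd_inj {f : Fin N → V} (hf : Function.Injective f) {i : Fin N} {v : V}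
    (hv : ∀ k, f k ≠ v) : Function.Injective (Function.update f i v) := by
  intro a b hab
  by_cases ha : a = i <;> by_cases hb : b = i
  · rw [ha, hb]
  · rw [ha, Function.update_self, Function.update_of_ne hb] at hab
    exact absurd hab.symm (hv b)
  · rw [hb, Function.update_self, Function.update_of_ne ha] at hab
    exact absurd hab (hv a)
  · rw [Function.update_of_ne ha, Function.update_of_ne hb] at hab
    exact hf hab

/-- the rotation permutation of indices: i ↦ j ↦ k ↦ i -/
def rotc (i j k : Fin N) : Equiv.Perm (Fin N) := Equiv.swap i j * Equiv.swap j k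

lemma rotc_i {i j k : Fin N} (hij : i ≠ j) (hik : i ≠ k) : rotc i j k i = j := by
  simp [rotc, Equiv.swap_apply_of_ne_of_ne hij hik]

lemma rotc_j {i j k : Fin N} (hjk : j ≠ k) (hik : i ≠ k) : rotc i j k j = k := by
  simp [rotc, Equiv.swap_apply_of_ne_of_ne (Ne.symm hik) (Ne.symm hjk)]

lemma rotc_k {i j k : Fin N} : rotc i j k k = i := by
  simp [rotc]

lemma rotc_other {i j k l : Fin N} (hi : l ≠ i) (hj : l ≠ j) (hk : l ≠ k) :
    rotc i j k l = l := by
  simp [rotc, Equiv.swap_apply_of_ne_of_ne hj hk, Equiv.swap_apply_of_ne_of_ne hi hj]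


lemma mrot {f : Fin N → V} {i j k : Fin N} (hij : i ≠ j) (hjk : j ≠ k) (hik : i ≠ k)
    (hB : ({f i, f j, f k} : Finset V) ∈ blocks) :
    Move G blocks f (f ∘ (rotc i j k)) := by
  refine Or.inr ⟨i, j, k, hij, hjk, hik, hB, Or.inl ?_, fun l h1 h2 h3 => ?_⟩
  · refine ⟨?_, ?_, ?_⟩ <;> simp only [Function.comp_apply]
    · rw [rotc_i hij hik]
    · rw [rotc_j hjk hik]
    · rw [rotc_k]
  · simp only [Function.comp_apply, rotc_other h1 h2 h3]

lemma rot_inj {f : Fin N → V} (hf : Function.Injective f) (i j k : Fin N) :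
    Function.Injective (f ∘ (rotc i j k)) :=
  hf.comp (Equiv.injective _)

lemma move_inj {f g : Fin N → V} (h : Move G blocks f g) (hf : Function.Injective f) :
    Function.Injective g := by
  rcases h with ⟨i, v, _, hv, hgi, hg⟩ | ⟨i, j, k, hij, hjk, hik, _, hdir, hg⟩
  · have : g = Function.update f i v := by
      funext l
      by_cases hl : l = i
      · subst hl; rw [hgi, Function.update_self]
      · rw [hg l hl, Function.update_of_ne hl]
    exact this ▸ upd_inj hf hv
  · rcases hdir with ⟨h1, h2, h3⟩ | ⟨h1, h2, h3⟩
    · have : g = f ∘ (rotc i j k) := by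
        funext l
        by_cases hi : l = i
        · subst hi; rw [h1]; simp only [Function.comp_apply]; rw [rotc_i hij hik]
        · by_cases hj : l = j
          · subst hj; rw [h2]; simp only [Function.comp_apply]; rw [rotc_j hjk hik]
          · by_cases hk : l = k
            · subst hk; rw [h3]; simp only [Function.comp_apply]; rw [rotc_k]
            · rw [hg l hi hj hk]; simp only [Function.comp_apply]; rw [rotc_other hi hj hk]
      exact this ▸ rot_inj hf i j k
    · have : g = f ∘ (rotc i k j) := by
        funext l
        by_cases hi : l = i
        · subst hi; rw [h1]; simp only [Function.comp_apply]; rw [rotc_i hik hij]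
        · by_cases hj : l = j
          · subst hj; rw [h2]; simp only [Function.comp_apply]; rw [rotc_k]
          · by_cases hk : l = k
            · subst hk; rw [h3]; simp only [Function.comp_apply]
              rw [rotc_j (Ne.symm hjk) hij]
            · rw [hg l hi hj hk]; simp only [Function.comp_apply]; rw [rotc_other hi hk hj]
      exact this ▸ rot_inj hf i k j

lemma move_symm {f g : Fin N → V} (h : Move G blocks f g) (hf : Function.Injective f) :
    Move G blocks g f := by
  rcases h with ⟨i, v, ha, hv, hgi, hg⟩ | ⟨i, j, k, hij, hjk, hik, hB, hdir, hg⟩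
  · refine Or.inl ⟨i, f i, ?_, ?_, rfl, fun l hl => (hg l hl).symm⟩
    · rw [hgi]; exact ha.symm
    · intro l
      by_cases hl : l = i
      · rw [hl, hgi]; exact fun e => hv i e.symm
      · rw [hg l hl]; exact fun e => hl (hf e)
  · have hBg : ({g i, g j, g k} : Finset V) = ({f i, f j, f k} : Finset V) := by
      rcases hdir with ⟨h1, h2, h3⟩ | ⟨h1, h2, h3⟩ <;> rw [h1, h2, h3] <;>
        · ext u; simp only [Finset.mem_insert, Finset.mem_singleton]; try tauto
    refine Or.inr ⟨i, j, k, hij, hjk, hik, hBg ▸ hB, ?_, fun l h1 h2 h3 => (hg l h1 h2 h3).symm⟩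
    rcases hdir with ⟨h1, h2, h3⟩ | ⟨h1, h2, h3⟩
    · exact Or.inr ⟨h3.symm, h1.symm, h2.symm⟩
    · exact Or.inl ⟨h2.symm, h3.symm, h1.symm⟩

lemma reach_inj {f g : Fin N → V} (h : Reach G blocks f g) (hf : Function.Injective f) :
    Function.Injective g := by
  induction h with
  | refl => exact hf
  | tail _ hbc ih => exact move_inj hbc ih

lemma reach_symm {f g : Fin N → V} (h : Reach G blocks f g) (hf : Function.Injective f) :
    Reach G blocks g f := by
  induction h with
  | refl => exact Relation.ReflTransGen.refl
  | @tail b c hab hbc ih =>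
    exact Relation.ReflTransGen.trans
      (Relation.ReflTransGen.single (move_symm hbc (reach_inj hab hf))) ih

lemma move_comp {f g : Fin N → V} (h : Move G blocks f g) (π : Equiv.Perm (Fin N)) :
    Move G blocks (f ∘ π) (g ∘ π) := by
  rcases h with ⟨i, v, ha, hv, hgi, hg⟩ | ⟨i, j, k, hij, hjk, hik, hB, hdir, hg⟩
  · refine Or.inl ⟨π⁻¹ i, v, ?_, fun l => hv (π l), ?_, fun l hl => ?_⟩
    · simpa using ha
    · simpa using hgi
    · have : π l ≠ i := fun e => hl (by simp [← e])
      simpa using hg (π l) this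
  · refine Or.inr ⟨π⁻¹ i, π⁻¹ j, π⁻¹ k, ?_, ?_, ?_, ?_, ?_, fun l h1 h2 h3 => ?_⟩
    · simp [hij]
    · simp [hjk]
    · simp [hik]
    · simpa using hB
    · rcases hdir with ⟨h1, h2, h3⟩ | ⟨h1, h2, h3⟩
      · exact Or.inl (by simpa using ⟨h1, h2, h3⟩)
      · exact Or.inr (by simpa using ⟨h1, h2, h3⟩)
    · have e1 : π l ≠ i := fun e => h1 (by simp [← e])
      have e2 : π l ≠ j := fun e => h2 (by simp [← e])
      have e3 : π l ≠ k := fun e => h3 (by simp [← e])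
      simpa using hg (π l) e1 e2 e3

lemma reach_comp {f g : Fin N → V} (h : Reach G blocks f g) (π : Equiv.Perm (Fin N)) :
    Reach G blocks (f ∘ π) (g ∘ π) := by
  induction h with
  | refl => exact Relation.ReflTransGen.refl
  | tail _ hbc ih => exact ih.tail (move_comp hbc π)

lemma exists_vacant [Fintype V] {f : Fin N → V} (hN : N < Fintype.card V) :
    ∃ v, ∀ k, f k ≠ v := by
  by_contra h
  push_neg at h
  obtain ⟨hsurj⟩ : ∃ _ : Function.Surjective f, True := by
    refine ⟨fun v => ?_, trivial⟩
    obtain ⟨k, hk⟩ := h v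
    exact ⟨k, hk⟩
  have := Fintype.card_le_of_surjective f hsurj
  simp only [Fintype.card_fin] at this
  omega

lemma triple_of_mem {B : Finset V} (h3 : B.card = 3) {v : V} (hv : v ∈ B) :
    ∃ b c, v ≠ b ∧ v ≠ c ∧ b ≠ c ∧ B = {v, b, c} := by
  obtain ⟨x, y, z, hxy, hxz, hyz, rfl⟩ := Finset.card_eq_three.1 h3
  simp only [Finset.mem_insert, Finset.mem_singleton] at hv
  rcases hv with rfl | rfl | rfl
  · exact ⟨y, z, hxy, hxz, hyz, rfl⟩
  · refine ⟨x, z, hxy.symm, hyz, hxz, ?_⟩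
    ext u; simp only [Finset.mem_insert, Finset.mem_singleton]; try tauto
  · refine ⟨x, y, hxz.symm, hyz.symm, hxy, ?_⟩
    ext u; simp only [Finset.mem_insert, Finset.mem_singleton]; try tauto

lemma triple_of_mem₂ {B : Finset V} (h3 : B.card = 3) {u v : V} (hu : u ∈ B) (hv : v ∈ B)
    (huv : u ≠ v) : ∃ e, u ≠ e ∧ v ≠ e ∧ B = {u, v, e} := by
  obtain ⟨b, c, hub, huc, hbc, rfl⟩ := triple_of_mem h3 hu
  simp only [Finset.mem_insert, Finset.mem_singleton] at hv
  rcases hv with rfl | rfl | rfl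
  · exact absurd rfl huv
  · refine ⟨c, huc, hbc, ?_⟩
    ext w; simp only [Finset.mem_insert, Finset.mem_singleton]; try tauto
  · refine ⟨b, hub, hbc.symm, ?_⟩
    ext w; simp only [Finset.mem_insert, Finset.mem_singleton]; try tauto

/-- distinct blocks are disjoint -/
lemma blocks_eq_of_mem (hpart : ∀ v : V, ∃! B, B ∈ blocks ∧ v ∈ B)
    {B B' : Finset V} (hB : B ∈ blocks) (hB' : B' ∈ blocks) {u : V}
    (hu : u ∈ B) (hu' : u ∈ B') : B = B' :=
  ((hpart u).unique ⟨hB, hu⟩ ⟨hB', hu'⟩)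

/-- the shape from which a direct 3-move swap of robots i and j is possible -/
def SwapShape (blocks : Finset (Finset V)) (g : Fin N → V) (i j : Fin N) : Prop :=
  ∃ y, (∀ k, g k ≠ y) ∧ ({g i, g j, y} : Finset V) ∈ blocks

lemma swap_shape_reach (hadj : ∀ B ∈ blocks, ∀ a ∈ B, ∀ b ∈ B, a ≠ b → G.Adj a b)
    {g : Fin N → V} (hg : Function.Injective g) {i j : Fin N} (hij : i ≠ j)
    (hs : SwapShape blocks g i j) : Reach G blocks g (g ∘ (Equiv.swap i j)) := by
  obtain ⟨y, hy, hB⟩ := hs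
  have hiy : g i ≠ y := hy i
  have hjy : g j ≠ y := hy j
  have hgij : g i ≠ g j := fun e => hij (hg e)
  set B : Finset V := {g i, g j, y} with hBdef
  have miB : g i ∈ B := by simp [hBdef]
  have mjB : g j ∈ B := by simp [hBdef]
  have myB : y ∈ B := by simp [hBdef]
  have adj_iy : G.Adj (g i) y := hadj B hB _ miB _ myB hiy
  have adj_ji : G.Adj (g j) (g i) := hadj B hB _ mjB _ miB hgij.symm
  have adj_yj : G.Adj y (g j) := hadj B hB _ myB _ mjB (Ne.symm hjy)
  -- move 1 : robot i to y
  set g1 := Function.update g i y with hg1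
  have m1 : Move G blocks g g1 := mv adj_iy hy
  have hg1i : g1 i = y := by simp [hg1]
  have hg1j : g1 j = g j := by rw [hg1, Function.update_of_ne hij.symm]
  have hv1 : ∀ k, g1 k ≠ g i := by
    intro k
    by_cases hk : k = i
    · rw [hk, hg1i]; exact Ne.symm hiy
    · rw [hg1, Function.update_of_ne hk]; exact fun e => hk (hg e)
  -- move 2 : robot j to g i
  set g2 := Function.update g1 j (g i) with hg2
  have m2 : Move G blocks g1 g2 := mv (hg1j ▸ adj_ji) hv1
  have hg2i : g2 i = y := by rw [hg2, Function.update_of_ne hij, hg1i]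
  have hg2j : g2 j = g i := by simp [hg2]
  have hv2 : ∀ k, g2 k ≠ g j := by
    intro k
    by_cases hk : k = j
    · rw [hk, hg2j]; exact hgij
    · rw [hg2, Function.update_of_ne hk]
      by_cases hk' : k = i
      · rw [hk', hg1i]; exact hjy.symm ∘ Eq.symm ∘ Eq.symm
      · rw [hg1, Function.update_of_ne hk']; exact fun e => hk (hg e)
  -- move 3 : robot i to g j
  set g3 := Function.update g2 i (g j) with hg3
  have m3 : Move G blocks g2 g3 := mv (hg2i ▸ adj_yj) hv2
  have : g3 = g ∘ (Equiv.swap i j) := by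
    funext l
    by_cases hl : l = i
    · rw [hl]; simp only [Function.comp_apply, Equiv.swap_apply_left]
      simp [hg3]
    · by_cases hl' : l = j
      · rw [hl']; simp only [Function.comp_apply, Equiv.swap_apply_right]
        rw [hg3, Function.update_of_ne hij.symm, hg2j]
      · simp only [Function.comp_apply, Equiv.swap_apply_of_ne_of_ne hl hl']
        rw [hg3, Function.update_of_ne hl, hg2, Function.update_of_ne hl', hg1,
          Function.update_of_ne hl]
  exact this ▸ (((Relation.ReflTransGen.single m1).tail m2).tail m3)

lemma exit (hadj : ∀ B ∈ blocks, ∀ a ∈ B, ∀ b ∈ B, a ≠ b → G.Adj a b)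
    (hcard : ∀ B ∈ blocks, B.card = 3)
    {f : Fin N → V} (hf : Function.Injective f) {i : Fin N} {B : Finset V} (hB : B ∈ blocks)
    (hiB : f i ∈ B) {a w : V} (haB : a ∈ B) (hwB : w ∉ B) (haw : G.Adj a w)
    (hw : ∀ k, f k ≠ w) :
    ∃ g, Reach G blocks f g ∧ Function.Injective g ∧ g i = w ∧ (∀ k, g k ≠ a) ∧
      (∀ l, f l ∉ B → g l = f l) ∧ (∀ l, l ≠ i → f l ∈ B → g l ∈ B) := by
  have hwa : w ≠ a := fun e => hwB (e ▸ haB)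
  by_cases hia : f i = a
  · refine ⟨Function.update f i w, Relation.ReflTransGen.single (mv (hia ▸ haw) hw),
      upd_inj hf hw, by simp, ?_, ?_, ?_⟩
    · intro k
      by_cases hk : k = i
      · rw [hk, Function.update_self]; exact hwa
      · rw [Function.update_of_ne hk, ← hia]; exact fun e => hk (hf e)
    · intro l hl
      have : l ≠ i := fun e => hl (e ▸ hiB)
      rw [Function.update_of_ne this]
    · intro l hl hlB
      rw [Function.update_of_ne hl]; exact hlB
  · by_cases hva : ∀ k, f k ≠ a
    · -- a vacant : i steps to a then to w
      set f1 := Function.update f i a with hf1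
      have m1 : Move G blocks f f1 := mv (hadj B hB _ hiB _ haB hia) hva
      have hf1inj := upd_inj hf (i := i) hva
      have hf1i : f1 i = a := by simp [hf1]
      have hv1w : ∀ k, f1 k ≠ w := by
        intro k
        by_cases hk : k = i
        · rw [hk, hf1i]; exact Ne.symm hwa
        · rw [hf1, Function.update_of_ne hk]; exact hw k
      set g := Function.update f1 i w with hgdef
      have m2 : Move G blocks f1 g := mv (hf1i ▸ haw) hv1w
      refine ⟨g, (Relation.ReflTransGen.single m1).tail m2, upd_inj hf1inj hv1w,
        by simp [hgdef], ?_, ?_, ?_⟩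
      · intro k
        by_cases hk : k = i
        · rw [hk, hgdef, Function.update_self]; exact hwa
        · rw [hgdef, Function.update_of_ne hk, hf1, Function.update_of_ne hk]; exact hva k
      · intro l hl
        have : l ≠ i := fun e => hl (e ▸ hiB)
        rw [hgdef, Function.update_of_ne this, hf1, Function.update_of_ne this]
      · intro l hl hlB
        rw [hgdef, Function.update_of_ne hl, hf1, Function.update_of_ne hl]; exact hlB
    · -- a occupied by robot r
      push_neg at hva
      obtain ⟨r, hr⟩ := hva
      have hri : r ≠ i := fun e => hia (e ▸ hr)
      obtain ⟨e, hae, hie, hBe⟩ := triple_of_mem₂ (hcard B hB) haB hiB (Ne.symm hia)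
      have heB : e ∈ B := by rw [hBe]; simp
      have hweB : w ≠ e := fun h => hwB (h ▸ heB)
      by_cases hve : ∀ k, f k ≠ e
      · -- third vertex vacant : r to e, i to a, i to w
        set f1 := Function.update f r e with hf1
        have m1 : Move G blocks f f1 := mv (hr ▸ hadj B hB _ haB _ heB hae) hve
        have hf1inj := upd_inj hf (i := r) hve
        have hf1i : f1 i = f i := by rw [hf1, Function.update_of_ne hri.symm]
        have hv1a : ∀ k, f1 k ≠ a := by
          intro k
          by_cases hk : k = r
          · rw [hk, hf1, Function.update_self]; exact Ne.symm hae
          · rw [hf1, Function.update_of_ne hk]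
            exact fun h => hk (hf (h.trans hr.symm))
        set f2 := Function.update f1 i a with hf2
        have m2 : Move G blocks f1 f2 := mv (hf1i ▸ hadj B hB _ hiB _ haB hia) hv1a
        have hf2inj := upd_inj hf1inj (i := i) hv1a
        have hf2i : f2 i = a := by simp [hf2]
        have hf2r : f2 r = e := by rw [hf2, Function.update_of_ne hri, hf1, Function.update_self]
        have hv2w : ∀ k, f2 k ≠ w := by
          intro k
          by_cases hk : k = i
          · rw [hk, hf2i]; exact Ne.symm hwa
          · rw [hf2, Function.update_of_ne hk]
            by_cases hk' : k = r
            · rw [hk', hf1, Function.update_self]; exact Ne.symm hweB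
            · rw [hf1, Function.update_of_ne hk']; exact hw k
        set g := Function.update f2 i w with hgdef
        have m3 : Move G blocks f2 g := mv (hf2i ▸ haw) hv2w
        refine ⟨g, ((Relation.ReflTransGen.single m1).tail m2).tail m3,
          upd_inj hf2inj hv2w, by simp [hgdef], ?_, ?_, ?_⟩
        · intro k
          by_cases hk : k = i
          · rw [hk, hgdef, Function.update_self]; exact hwa
          · rw [hgdef, Function.update_of_ne hk, hf2, Function.update_of_ne hk]; exact hv1a k
        · intro l hl
          have hl1 : l ≠ i := fun h => hl (h ▸ hiB)
          have hl2 : l ≠ r := fun h => hl (h ▸ hr ▸ haB)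
          rw [hgdef, Function.update_of_ne hl1, hf2, Function.update_of_ne hl1, hf1,
            Function.update_of_ne hl2]
        · intro l hl hlB
          rw [hgdef, Function.update_of_ne hl, hf2, Function.update_of_ne hl, hf1]
          by_cases hl2 : l = r
          · rw [hl2, Function.update_self]; exact heB
          · rw [Function.update_of_ne hl2]; exact hlB
      · -- block full : rotate i to a, then i to w
        push_neg at hve
        obtain ⟨m0, hm0⟩ := hve
        have hm0i : m0 ≠ i := fun h => hie (h ▸ hm0)
        have hm0r : m0 ≠ r := fun h => hae (hr.symm.trans (h ▸ hm0))
        have hBrot : ({f i, f r, f m0} : Finset V) ∈ blocks := by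
          have : ({f i, f r, f m0} : Finset V) = B := by
            rw [hr, hm0, hBe]; ext u
            simp only [Finset.mem_insert, Finset.mem_singleton]; tauto
          rw [this]; exact hB
        set f1 := f ∘ (rotc i r m0) with hf1
        have m1 : Move G blocks f f1 := mrot hri.symm (Ne.symm hm0r) (Ne.symm hm0i) hBrot
        have hf1inj : Function.Injective f1 := rot_inj hf i r m0
        have hf1i : f1 i = a := by
          rw [hf1]; simp only [Function.comp_apply]
          rw [rotc_i hri.symm (Ne.symm hm0i), hr]
        have hv1w : ∀ k, f1 k ≠ w := fun k => hw _
        set g := Function.update f1 i w with hgdef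
        have m2 : Move G blocks f1 g := mv (hf1i ▸ haw) hv1w
        refine ⟨g, (Relation.ReflTransGen.single m1).tail m2, upd_inj hf1inj hv1w,
          by simp [hgdef], ?_, ?_, ?_⟩
        · intro k
          by_cases hk : k = i
          · rw [hk, hgdef, Function.update_self]; exact hwa
          · rw [hgdef, Function.update_of_ne hk, ← hf1i]
            exact fun h => hk (hf1inj h)
        · intro l hl
          have hl1 : l ≠ i := fun h => hl (h ▸ hiB)
          have hl2 : l ≠ r := fun h => hl (h ▸ hr ▸ haB)
          have hl3 : l ≠ m0 := fun h => hl (h ▸ hm0 ▸ heB)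
          rw [hgdef, Function.update_of_ne hl1, hf1]
          simp only [Function.comp_apply]
          rw [rotc_other hl1 hl2 hl3]
        · intro l hl hlB
          rw [hgdef, Function.update_of_ne hl, hf1]
          simp only [Function.comp_apply]
          by_cases hl2 : l = r
          · rw [hl2, rotc_j (Ne.symm hm0r) (Ne.symm hm0i), hm0]; exact heB
          · by_cases hl3 : l = m0
            · rw [hl3, rotc_k]; exact hiB
            · rw [rotc_other hl hl2 hl3]; exact hlB

lemma holeTo (hadj : ∀ B ∈ blocks, ∀ a ∈ B, ∀ b ∈ B, a ≠ b → G.Adj a b)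
    {f : Fin N → V} (hf : Function.Injective f) {i : Fin N} {B : Finset V} (hB : B ∈ blocks)
    (hiB : f i ∈ B) {y : V} (hyB : y ∈ B) (hy : ∀ k, f k ≠ y) {a : V} (haB : a ∈ B) :
    ∃ g, Reach G blocks f g ∧ Function.Injective g ∧ (∀ k, g k ≠ a) ∧ g i ∈ B ∧
      (∀ l, f l ∉ B → g l = f l) ∧ (∀ l, f l ∈ B → g l ∈ B) := by
  by_cases hva : ∀ k, f k ≠ a
  · exact ⟨f, Relation.ReflTransGen.refl, hf, hva, hiB, fun l _ => rfl, fun l h => h⟩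
  · push_neg at hva
    obtain ⟨r, hr⟩ := hva
    have hay : a ≠ y := fun h => hy r (hr.trans h)
    have madj : G.Adj (f r) y := hr ▸ hadj B hB _ (hr ▸ haB) _ hyB (hr ▸ hay)
    set g := Function.update f r y with hgdef
    have m1 : Move G blocks f g := mv madj hy
    refine ⟨g, Relation.ReflTransGen.single m1, upd_inj hf (i := r) hy, ?_, ?_, ?_, ?_⟩
    · intro k
      by_cases hk : k = r
      · rw [hk, hgdef, Function.update_self]; exact Ne.symm hay
      · rw [hgdef, Function.update_of_ne hk]
        exact fun h => hk (hf (h.trans hr.symm))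
    · by_cases hir : i = r
      · rw [hir, hgdef, Function.update_self]; exact hyB
      · rw [hgdef, Function.update_of_ne hir]; exact hiB
    · intro l hl
      have : l ≠ r := fun h => hl (h ▸ hr ▸ haB)
      rw [hgdef, Function.update_of_ne this]
    · intro l hl
      by_cases hlr : l = r
      · rw [hlr, hgdef, Function.update_self]; exact hyB
      · rw [hgdef, Function.update_of_ne hlr]; exact hl

lemma pullenter (hadj : ∀ B ∈ blocks, ∀ a ∈ B, ∀ b ∈ B, a ≠ b → G.Adj a b)
    (hcard : ∀ B ∈ blocks, B.card = 3)
    {f : Fin N → V} (hf : Function.Injective f) {i r : Fin N} {B : Finset V} (hB : B ∈ blocks)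
    (hiB : f i ∈ B) {y : V} (hyB : y ∈ B) (hy : ∀ k, f k ≠ y)
    {a w : V} (haB : a ∈ B) (hwB : w ∉ B) (haw : G.Adj a w) (hrw : f r = w) :
    ∃ g, Reach G blocks f g ∧ Function.Injective g ∧ g i = w ∧ (∀ k, g k ≠ a) ∧
      (∀ l, f l ∉ B → l ≠ r → g l = f l) ∧ (∀ l, l ≠ i → f l ∈ B → g l ∈ B) ∧ g r ∈ B := by
  have hri : r ≠ i := fun h => hwB ((h ▸ hrw) ▸ hiB)
  -- step 1 : hole to a
  obtain ⟨f1, r1, hinj1, hhole1, hi1, hout1, hin1⟩ := holeTo hadj hf hB hiB hyB hy haB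
  have hf1r : f1 r = w := by rw [hout1 r (hrw ▸ hwB), hrw]
  -- step 2 : robot r from w to a
  set f2 := Function.update f1 r a with hf2
  have m2 : Move G blocks f1 f2 := mv (hf1r ▸ haw.symm) hhole1
  have hinj2 := upd_inj hinj1 (i := r) hhole1
  have hf2i : f2 i = f1 i := by rw [hf2, Function.update_of_ne hri.symm]
  have hf2r : f2 r = a := by simp [hf2]
  have hv2w : ∀ k, f2 k ≠ w := by
    intro k
    by_cases hk : k = r
    · rw [hk, hf2r]; exact fun h => hwB (h ▸ haB)
    · rw [hf2, Function.update_of_ne hk, ← hf1r]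
      exact fun h => hk (hinj1 h)
  -- step 3 : robot i exits to w
  obtain ⟨g, r3, hinj3, hgi, hhole3, hout3, hin3⟩ :=
    exit hadj hcard hinj2 hB (hf2i ▸ hi1) haB hwB haw hv2w
  refine ⟨g, (r1.tail m2).trans r3, hinj3, hgi, hhole3, ?_, ?_, ?_⟩
  · intro l hl hlr
    have h1 : f1 l = f l := hout1 l hl
    have h2 : Function.update f1 r a l = f l := by rw [Function.update_of_ne hlr, h1]
    rw [hout3 l (by rw [h2]; exact hl), h2]
  · intro l hl hlB
    have h1 : f1 l ∈ B := hin1 l hlB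
    have h2 : Function.update f1 r a l ∈ B := by
      by_cases hlr : l = r
      · rw [hlr, Function.update_self]; exact haB
      · rw [Function.update_of_ne hlr]; exact h1
    exact hin3 l hl h2
  · exact hin3 r hri (by rw [Function.update_self]; exact haB)

lemma triple_eq_of_subset {B : Finset V} (h3 : B.card = 3) {x y z : V}
    (hx : x ∈ B) (hy : y ∈ B) (hz : z ∈ B) (hxy : x ≠ y) (hxz : x ≠ z) (hyz : y ≠ z) :
    ({x, y, z} : Finset V) = B := by
  apply Finset.eq_of_subset_of_card_le
  · intro u
    simp only [Finset.mem_insert, Finset.mem_singleton]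
    rintro (rfl | rfl | rfl) <;> assumption
  · rw [h3, Finset.card_insert_of_notMem (by simp [hxy, hxz]),
      Finset.card_insert_of_notMem (by simp [hyz]), Finset.card_singleton]

lemma expel (hadj : ∀ B ∈ blocks, ∀ a ∈ B, ∀ b ∈ B, a ≠ b → G.Adj a b)
    (hcard : ∀ B ∈ blocks, B.card = 3)
    {g : Fin N → V} (hg : Function.Injective g) {i m o : Fin N}
    (hmi : m ≠ i) (hoi : o ≠ i) (hom : o ≠ m)
    {B' : Finset V} (hB' : B' ∈ blocks) (hgi : g i ∈ B') (hgm : g m ∈ B') (hgo : g o ∈ B')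
    {a : V} (haB' : a ∉ B') (hadja : G.Adj a (g i)) (hhole : ∀ k, g k ≠ a) :
    ∃ g3, Reach G blocks g g3 ∧ Function.Injective g3 ∧ g3 i = g o ∧ g3 o = g m ∧
      g3 m = a ∧ (∀ k, g3 k ≠ g i) ∧ (∀ l, l ≠ i → l ≠ m → l ≠ o → g3 l = g l) := by
  have hBrot : ({g m, g i, g o} : Finset V) ∈ blocks := by
    rw [triple_eq_of_subset (hcard B' hB') hgm hgi hgo
      (fun h => hmi (hg h)) (fun h => hom (hg h).symm) (fun h => hoi (hg h).symm)]
    exact hB'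
  set g2 := g ∘ (rotc m i o) with hg2
  have m1 : Move G blocks g g2 :=
    mrot hmi (fun h => hoi h.symm) (fun h => hom h.symm) hBrot
  have hg2inj : Function.Injective g2 := rot_inj hg m i o
  have hg2m : g2 m = g i := by
    rw [hg2]; simp only [Function.comp_apply]
    rw [rotc_i hmi (fun h => hom h.symm)]
  have hg2i : g2 i = g o := by
    rw [hg2]; simp only [Function.comp_apply]
    rw [rotc_j (fun h => hoi h.symm) (fun h => hom h.symm)]
  have hg2o : g2 o = g m := by
    rw [hg2]; simp only [Function.comp_apply, rotc_k]
  have hv2a : ∀ k, g2 k ≠ a := fun k => hhole _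
  set g3 := Function.update g2 m a with hg3
  have m2 : Move G blocks g2 g3 := mv (hg2m ▸ hadja.symm) hv2a
  refine ⟨g3, (Relation.ReflTransGen.single m1).tail m2, upd_inj hg2inj (i := m) hv2a,
    ?_, ?_, by simp [hg3], ?_, ?_⟩
  · rw [hg3, Function.update_of_ne (fun h => hmi h.symm), hg2i]
  · rw [hg3, Function.update_of_ne hom, hg2o]
  · intro k
    by_cases hk : k = m
    · rw [hk, hg3, Function.update_self]
      exact fun h => haB' (h ▸ hgi)
    · rw [hg3, Function.update_of_ne hk, ← hg2m]
      exact fun h => hk (hg2inj h)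
  · intro l hli hlm hlo
    rw [hg3, Function.update_of_ne hlm, hg2]
    simp only [Function.comp_apply]
    rw [rotc_other hlm hli hlo]

lemma cross (hpart : ∀ v : V, ∃! B, B ∈ blocks ∧ v ∈ B)
    (hcard : ∀ B ∈ blocks, B.card = 3)
    (hadj : ∀ B ∈ blocks, ∀ a ∈ B, ∀ b ∈ B, a ≠ b → G.Adj a b)
    {f : Fin N → V} (hf : Function.Injective f) {i j : Fin N} (hij : i ≠ j)
    {B B' : Finset V} (hB : B ∈ blocks) (hB' : B' ∈ blocks)
    (hiB : f i ∈ B) {y : V} (hyB : y ∈ B) (hy : ∀ k, f k ≠ y)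
    {a w : V} (haB : a ∈ B) (hwB' : w ∈ B') (hwB : w ∉ B) (haw : G.Adj a w)
    (hjB : f j ∉ B) :
    ∃ g, Reach G blocks f g ∧ Function.Injective g ∧
      (SwapShape blocks g i j ∨
       (g i ∈ B' ∧ (∃ y' ∈ B', ∀ k, g k ≠ y') ∧ g j = f j)) := by
  have hdisj : ∀ u, u ∈ B' → u ∉ B := fun u hu' hu =>
    hwB ((blocks_eq_of_mem hpart hB hB' hu hu') ▸ hwB')
  by_cases hwv : ∀ k, f k ≠ w
  · -- w vacant
    obtain ⟨s, t, hws, hwt, hst, hB'e⟩ := triple_of_mem (hcard B' hB') hwB'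
    have hsB' : s ∈ B' := by rw [hB'e]; simp
    have htB' : t ∈ B' := by rw [hB'e]; simp
    -- if some vertex of B' besides w is vacant, exit directly
    have key0 : ∀ u : V, u ∈ B' → u ≠ w → (∀ k, f k ≠ u) →
        ∃ g, Reach G blocks f g ∧ Function.Injective g ∧
          (SwapShape blocks g i j ∨
           (g i ∈ B' ∧ (∃ y' ∈ B', ∀ k, g k ≠ y') ∧ g j = f j)) := by
      intro u huB' huw huv
      obtain ⟨g, r1, hginj, hgi, hghole, hout, hin⟩ :=
        exit hadj hcard hf hB hiB haB hwB haw hwv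
      refine ⟨g, r1, hginj, Or.inr ⟨by rw [hgi]; exact hwB', ⟨u, huB', ?_⟩, hout j hjB⟩⟩
      intro k
      by_cases hki : k = i
      · rw [hki, hgi]; exact Ne.symm huw
      · by_cases hfk : f k ∈ B
        · exact fun h => (hdisj u huB') (h ▸ hin k hki hfk)
        · rw [hout k hfk]; exact huv k
    -- if both s,t occupied, slide a non-j occupant onto w and pull it into B
    have key : ∀ (m : Fin N) (q : V), f m = q → q ∈ B' → q ≠ w → m ≠ j →
        ∃ g, Reach G blocks f g ∧ Function.Injective g ∧
          (SwapShape blocks g i j ∨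
           (g i ∈ B' ∧ (∃ y' ∈ B', ∀ k, g k ≠ y') ∧ g j = f j)) := by
      intro m q hmq hqB' hqw hmj
      have hqB : q ∉ B := hdisj q hqB'
      have hmi : m ≠ i := fun h => hqB ((h ▸ hmq) ▸ hiB)
      have madj : G.Adj (f m) w := hmq ▸ hadj B' hB' _ (hmq ▸ hqB') _ hwB' (hmq ▸ hqw)
      set f1 := Function.update f m w with hf1def
      have m1 : Move G blocks f f1 := mv madj hwv
      have hf1inj := upd_inj hf (i := m) hwv
      have hf1i : f1 i = f i := by rw [hf1def, Function.update_of_ne hmi.symm]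
      have hf1m : f1 m = w := by simp [hf1def]
      have hy1 : ∀ k, f1 k ≠ y := by
        intro k
        by_cases hk : k = m
        · rw [hk, hf1m]; exact fun h => hwB (h ▸ hyB)
        · rw [hf1def, Function.update_of_ne hk]; exact hy k
      obtain ⟨g, r2, hginj, hgi, hghole, hout, hin, hgm⟩ :=
        pullenter hadj hcard hf1inj hB (hf1i ▸ hiB) hyB hy1 haB hwB haw hf1m
      have hgj : g j = f j := by
        have h1 : Function.update f m w j = f j := Function.update_of_ne (Ne.symm hmj) _ _
        rw [hout j (by rw [h1]; exact hjB) (Ne.symm hmj), h1]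
      refine ⟨g, (Relation.ReflTransGen.single m1).trans r2, hginj,
        Or.inr ⟨by rw [hgi]; exact hwB', ⟨q, hqB', ?_⟩, hgj⟩⟩
      intro k
      by_cases hkm : k = m
      · rw [hkm]; exact fun h => hqB (h ▸ hgm)
      · by_cases hki : k = i
        · rw [hki, hgi]; exact Ne.symm hqw
        · by_cases hfk : f1 k ∈ B
          · exact fun h => hqB (h ▸ hin k hki hfk)
          · rw [hout k hfk hkm, Function.update_of_ne hkm]
            exact fun h => hkm (hf (h.trans hmq.symm))
    by_cases hsv : ∀ k, f k ≠ s
    · exact key0 s hsB' (Ne.symm hws) hsv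
    · push_neg at hsv; obtain ⟨rs, hrs⟩ := hsv
      by_cases htv : ∀ k, f k ≠ t
      · exact key0 t htB' (Ne.symm hwt) htv
      · push_neg at htv; obtain ⟨rt, hrt⟩ := htv
        by_cases hrsj : rs = j
        · have hrtj : rt ≠ j := fun h => hst (by rw [← hrs, ← hrt, hrsj, h])
          exact key rt t hrt htB' (Ne.symm hwt) hrtj
        · exact key rs s hrs hsB' (Ne.symm hws) hrsj
  · -- w occupied by robot r
    push_neg at hwv; obtain ⟨r, hrw⟩ := hwv
    by_cases hrj : r = j
    · -- the robot at w is j itself : pull it into B and craft the swap shape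
      have hjw : f j = w := hrj ▸ hrw
      obtain ⟨f1, r1, hinj1, hhole1, hi1, hout1, hin1⟩ := holeTo hadj hf hB hiB hyB hy haB
      have hf1j : f1 j = w := by rw [hout1 j hjB, hjw]
      set f2 := Function.update f1 j a with hf2def
      have m2 : Move G blocks f1 f2 := mv (hf1j ▸ haw.symm) hhole1
      have hinj2 := upd_inj hinj1 (i := j) hhole1
      have hf2j : f2 j = a := by simp [hf2def]
      have hf2i : f2 i = f1 i := by rw [hf2def, Function.update_of_ne hij]
      have hi2 : f2 i ∈ B := hf2i ▸ hi1
      have hia2 : a ≠ f2 i := fun h => hij (hinj2 (hf2j.trans h)).symm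
      have hv2w : ∀ k, f2 k ≠ w := by
        intro k
        by_cases hk : k = j
        · rw [hk, hf2j]; exact fun h => hwB (h ▸ haB)
        · rw [hf2def, Function.update_of_ne hk, ← hf1j]
          exact fun h => hk (hinj1 h)
      obtain ⟨e, hae, hie, hBe⟩ := triple_of_mem₂ (hcard B hB) haB hi2 hia2
      have heB : e ∈ B := by rw [hBe]; simp
      by_cases hve : ∀ k, f2 k ≠ e
      · refine ⟨f2, r1.tail m2, hinj2, Or.inl ⟨e, hve, ?_⟩⟩
        have he : ({f2 i, f2 j, e} : Finset V) = B := by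
          rw [hf2j, hBe]; ext u
          simp only [Finset.mem_insert, Finset.mem_singleton]; tauto
        rw [he]; exact hB
      · push_neg at hve; obtain ⟨m0, hm0⟩ := hve
        have hm0i : m0 ≠ i := fun h => hie (h ▸ hm0)
        have hm0j : m0 ≠ j := fun h => hae (hf2j.symm.trans (h ▸ hm0))
        have hBrot : ({f2 m0, f2 j, f2 i} : Finset V) ∈ blocks := by
          have he : ({f2 m0, f2 j, f2 i} : Finset V) = B := by
            rw [hm0, hf2j, hBe]; ext u
            simp only [Finset.mem_insert, Finset.mem_singleton]; tauto
          rw [he]; exact hB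
        set f3 := f2 ∘ (rotc m0 j i) with hf3def
        have m3 : Move G blocks f2 f3 := mrot hm0j (Ne.symm hij) hm0i hBrot
        have hf3m0 : f3 m0 = a := by
          rw [hf3def]; simp only [Function.comp_apply]
          rw [rotc_i hm0j hm0i, hf2j]
        have hf3j : f3 j = f2 i := by
          rw [hf3def]; simp only [Function.comp_apply]
          rw [rotc_j (Ne.symm hij) hm0i]
        have hf3i : f3 i = e := by
          rw [hf3def]; simp only [Function.comp_apply, rotc_k, hm0]
        have hv3w : ∀ k, f3 k ≠ w := fun k => hv2w _
        set g := Function.update f3 m0 w with hgdef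
        have m4 : Move G blocks f3 g := mv (hf3m0 ▸ haw) hv3w
        have hinj3 : Function.Injective f3 := rot_inj hinj2 m0 j i
        have hgi : g i = e := by rw [hgdef, Function.update_of_ne (Ne.symm hm0i), hf3i]
        have hgj : g j = f2 i := by rw [hgdef, Function.update_of_ne (Ne.symm hm0j), hf3j]
        refine ⟨g, ((r1.tail m2).tail m3).tail m4, upd_inj hinj3 (i := m0) hv3w,
          Or.inl ⟨a, ?_, ?_⟩⟩
        · intro k
          by_cases hk : k = m0
          · rw [hk, hgdef, Function.update_self]; exact fun h => hwB (h ▸ haB)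
          · rw [hgdef, Function.update_of_ne hk, ← hf3m0]
            exact fun h => hk (hinj3 h)
        · have he : ({g i, g j, a} : Finset V) = B := by
            rw [hgi, hgj, hBe]; ext u
            simp only [Finset.mem_insert, Finset.mem_singleton]; tauto
          rw [he]; exact hB
    · -- the robot at w is not j : pull it in, enter, maybe expel
      obtain ⟨g1, r1, hinj1, hg1i, hhole1, hout1, hin1, hg1r⟩ :=
        pullenter hadj hcard hf hB hiB hyB hy haB hwB haw hrw
      obtain ⟨s, t, hws, hwt, hst, hB'e⟩ := triple_of_mem (hcard B' hB') hwB'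
      have hsB' : s ∈ B' := by rw [hB'e]; simp
      have htB' : t ∈ B' := by rw [hB'e]; simp
      have hjr : j ≠ r := fun h => hrj h.symm
      have hg1j : g1 j = f j := hout1 j hjB hjr
      by_cases hsv : ∀ k, g1 k ≠ s
      · exact ⟨g1, r1, hinj1, Or.inr ⟨by rw [hg1i]; exact hwB', ⟨s, hsB', hsv⟩, hg1j⟩⟩
      · by_cases htv : ∀ k, g1 k ≠ t
        · exact ⟨g1, r1, hinj1, Or.inr ⟨by rw [hg1i]; exact hwB', ⟨t, htB', htv⟩, hg1j⟩⟩
        · push_neg at hsv; obtain ⟨ps, hps⟩ := hsv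
          push_neg at htv; obtain ⟨pt, hpt⟩ := htv
          have hpsi : ps ≠ i := fun h => hws (hg1i.symm.trans (h ▸ hps))
          have hpti : pt ≠ i := fun h => hwt (hg1i.symm.trans (h ▸ hpt))
          have hpst : ps ≠ pt := fun h => hst ((h ▸ hps : g1 pt = s).symm.trans hpt)
          have key2 : ∀ (m o : Fin N), m ≠ i → o ≠ i → o ≠ m → m ≠ j →
              g1 m ∈ B' → g1 o ∈ B' →
              ∃ g, Reach G blocks f g ∧ Function.Injective g ∧
                (SwapShape blocks g i j ∨
                 (g i ∈ B' ∧ (∃ y' ∈ B', ∀ k, g k ≠ y') ∧ g j = f j)) := by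
            intro m o hmi hoi hom hmj hgm hgo
            have haB'2 : a ∉ B' := fun h => (hdisj a h) haB
            have hadja : G.Adj a (g1 i) := by rw [hg1i]; exact haw
            obtain ⟨g3, r3, hinj3, h3i, h3o, h3m, h3hole, h3fix⟩ :=
              expel hadj hcard hinj1 hmi hoi hom hB' (by rw [hg1i]; exact hwB') hgm hgo
                haB'2 hadja hhole1
            by_cases hjo : j = o
            · refine ⟨g3, r1.trans r3, hinj3, Or.inl ⟨g1 i, h3hole, ?_⟩⟩
              have h3j : g3 j = g1 m := by rw [hjo]; exact h3o
              rw [h3i, h3j,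
                triple_eq_of_subset (hcard B' hB') hgo hgm (by rw [hg1i]; exact hwB')
                  (fun h => hom (hinj1 h)) (fun h => hoi (hinj1 h)) (fun h => hmi (hinj1 h))]
              exact hB'
            · refine ⟨g3, r1.trans r3, hinj3, Or.inr ⟨by rw [h3i]; exact hgo,
                ⟨g1 i, by rw [hg1i]; exact hwB', h3hole⟩, ?_⟩⟩
              rw [h3fix j (Ne.symm hij) (fun h => hmj h.symm) hjo, hg1j]
          by_cases hpsj : ps = j
          · have hptj : pt ≠ j := fun h => hpst (hpsj.trans h.symm)
            exact key2 pt ps hpti hpsi hpst hptj (by rw [hpt]; exact htB')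
              (by rw [hps]; exact hsB')
          · exact key2 ps pt hpsi hpti (Ne.symm hpst) hpsj (by rw [hps]; exact hsB')
              (by rw [hpt]; exact htB')

lemma holeToBlock (hpart : ∀ v : V, ∃! B, B ∈ blocks ∧ v ∈ B)
    (hcard : ∀ B ∈ blocks, B.card = 3)
    (hadj : ∀ B ∈ blocks, ∀ a ∈ B, ∀ b ∈ B, a ≠ b → G.Adj a b)
    {i : Fin N} {v x : V} (wk : G.Walk v x) :
    ∀ (f : Fin N → V), Function.Injective f → f i = x → (∀ k, f k ≠ v) →
      ∃ g, Reach G blocks f g ∧ Function.Injective g ∧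
        ∃ B ∈ blocks, g i ∈ B ∧ ∃ y ∈ B, ∀ k, g k ≠ y := by
  induction wk with
  | nil =>
    intro f hf hfi hv
    exact absurd hfi (hv i)
  | @cons v v₁ x h p ih =>
    intro f hf hfi hv
    obtain ⟨B, hB, hiB⟩ := (hpart (f i)).exists
    by_cases hv1B : v₁ ∈ B
    · by_cases hvac : ∀ k, f k ≠ v₁
      · exact ⟨f, Relation.ReflTransGen.refl, hf, B, hB, hiB, v₁, hv1B, hvac⟩
      · push_neg at hvac; obtain ⟨m, hm⟩ := hvac
        by_cases hmi : m = i
        · have hv1fi : f i = v₁ := by rw [← hmi, hm]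
          obtain ⟨e1, e2, hie1, hie2, he12, hBe⟩ := triple_of_mem (hcard B hB) hiB
          have he1B : e1 ∈ B := by rw [hBe]; simp
          have he2B : e2 ∈ B := by rw [hBe]; simp
          by_cases hv1 : ∀ k, f k ≠ e1
          · exact ⟨f, Relation.ReflTransGen.refl, hf, B, hB, hiB, e1, he1B, hv1⟩
          · by_cases hv2 : ∀ k, f k ≠ e2
            · exact ⟨f, Relation.ReflTransGen.refl, hf, B, hB, hiB, e2, he2B, hv2⟩
            · push_neg at hv1 hv2
              obtain ⟨r1, hr1⟩ := hv1; obtain ⟨r2, hr2⟩ := hv2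
              have hr1i : r1 ≠ i := fun hh => hie1 (hh ▸ hr1)
              have hr2i : r2 ≠ i := fun hh => hie2 (hh ▸ hr2)
              have hr12 : r1 ≠ r2 := fun hh => he12 ((hh ▸ hr1 : f r2 = e1).symm.trans hr2)
              have hBrot : ({f r1, f i, f r2} : Finset V) ∈ blocks := by
                have he : ({f r1, f i, f r2} : Finset V) = B := by
                  rw [hr1, hr2, hBe]; ext u
                  simp only [Finset.mem_insert, Finset.mem_singleton]; tauto
                rw [he]; exact hB
              set f1 := f ∘ (rotc r1 i r2) with hf1def
              have m1 : Move G blocks f f1 := mrot hr1i (Ne.symm hr2i) hr12 hBrot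
              have hinj1 : Function.Injective f1 := rot_inj hf r1 i r2
              have hf1r1 : f1 r1 = f i := by
                rw [hf1def]; simp only [Function.comp_apply]
                rw [rotc_i hr1i hr12]
              have hf1i : f1 i = e2 := by
                rw [hf1def]; simp only [Function.comp_apply]
                rw [rotc_j (Ne.symm hr2i) hr12, hr2]
              have hv1v : ∀ k, f1 k ≠ v := fun k => hv _
              have madj : G.Adj (f1 r1) v := by rw [hf1r1, hv1fi]; exact h.symm
              refine ⟨Function.update f1 r1 v,
                (Relation.ReflTransGen.single m1).tail (mv madj hv1v),
                upd_inj hinj1 (i := r1) hv1v, B, hB, ?_, v₁, hv1B, ?_⟩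
              · rw [Function.update_of_ne (Ne.symm hr1i), hf1i]; exact he2B
              · intro k
                by_cases hk : k = r1
                · rw [hk, Function.update_self]; exact h.ne
                · rw [Function.update_of_ne hk, ← hv1fi, ← hf1r1]
                  exact fun hh => hk (hinj1 hh)
        · have madj : G.Adj (f m) v := by rw [hm]; exact h.symm
          refine ⟨Function.update f m v, Relation.ReflTransGen.single (mv madj hv),
            upd_inj hf (i := m) hv, B, hB, ?_, v₁, hv1B, ?_⟩
          · rw [Function.update_of_ne (fun hh => hmi hh.symm)]; exact hiB
          · intro k
            by_cases hk : k = m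
            · rw [hk, Function.update_self]; exact h.ne
            · rw [Function.update_of_ne hk, ← hm]
              exact fun hh => hk (hf hh)
    · by_cases hvac : ∀ k, f k ≠ v₁
      · exact ih f hf hfi hvac
      · push_neg at hvac; obtain ⟨m, hm⟩ := hvac
        have hmi : m ≠ i := fun hh => hv1B ((hh ▸ hm) ▸ hiB)
        have madj : G.Adj (f m) v := by rw [hm]; exact h.symm
        set f1 := Function.update f m v with hf1def
        have hf1i : f1 i = f i := by rw [hf1def, Function.update_of_ne hmi.symm]
        have hvac1 : ∀ k, f1 k ≠ v₁ := by
          intro k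
          by_cases hk : k = m
          · rw [hk, hf1def, Function.update_self]; exact h.ne
          · rw [hf1def, Function.update_of_ne hk, ← hm]
            exact fun hh => hk (hf hh)
        obtain ⟨g, rg, hg, hres⟩ := ih f1 (upd_inj hf (i := m) hv) (hf1i.trans hfi) hvac1
        exact ⟨g, (Relation.ReflTransGen.single (mv madj hv)).trans rg, hg, hres⟩

lemma main (hpart : ∀ v : V, ∃! B, B ∈ blocks ∧ v ∈ B)
    (hcard : ∀ B ∈ blocks, B.card = 3)
    (hadj : ∀ B ∈ blocks, ∀ a ∈ B, ∀ b ∈ B, a ≠ b → G.Adj a b)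
    {i j : Fin N} (hij : i ≠ j) {z x : V} (wk : G.Walk x z) :
    ∀ (f : Fin N → V), Function.Injective f → f j = z →
      ∀ B : Finset V, B ∈ blocks → f i ∈ B → x ∈ B → (∃ y ∈ B, ∀ k, f k ≠ y) →
      ∃ g, Reach G blocks f g ∧ Function.Injective g ∧ SwapShape blocks g i j := by
  induction wk with
  | nil =>
    intro f hf hfj B hB hiB hxB hhole
    obtain ⟨y, hyB, hy⟩ := hhole
    have hfjB : f j ∈ B := by rw [hfj]; exact hxB
    refine ⟨f, Relation.ReflTransGen.refl, hf, y, hy, ?_⟩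
    rw [triple_eq_of_subset (hcard B hB) hiB hfjB hyB (fun hh => hij (hf hh)) (hy i) (hy j)]
    exact hB
  | @cons x x₁ z h p ih =>
    intro f hf hfj B hB hiB hxB hhole
    by_cases hjB : f j ∈ B
    · obtain ⟨y, hyB, hy⟩ := hhole
      refine ⟨f, Relation.ReflTransGen.refl, hf, y, hy, ?_⟩
      rw [triple_eq_of_subset (hcard B hB) hiB hjB hyB (fun hh => hij (hf hh)) (hy i) (hy j)]
      exact hB
    · obtain ⟨y, hyB, hy⟩ := hhole
      by_cases hx1B : x₁ ∈ B
      · exact ih f hf hfj B hB hiB hx1B ⟨y, hyB, hy⟩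
      · obtain ⟨B', hB', hx1B'⟩ := (hpart x₁).exists
        obtain ⟨g, rg, hginj, hres⟩ :=
          cross hpart hcard hadj hf hij hB hB' hiB hyB hy hxB hx1B' hx1B h hjB
        rcases hres with hshape | ⟨hgi, ⟨y', hy'B', hy'⟩, hgj⟩
        · exact ⟨g, rg, hginj, hshape⟩
        · obtain ⟨g2, rg2, hg2, hsh⟩ :=
            ih g hginj (hgj.trans hfj) B' hB' hgi hx1B' ⟨y', hy'B', hy'⟩
          exact ⟨g2, rg.trans rg2, hg2, hsh⟩

lemma reach_swap [Fintype V] (hconn : G.Connected)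
    (hpart : ∀ v : V, ∃! B, B ∈ blocks ∧ v ∈ B)
    (hcard : ∀ B ∈ blocks, B.card = 3)
    (hadj : ∀ B ∈ blocks, ∀ a ∈ B, ∀ b ∈ B, a ≠ b → G.Adj a b)
    (hN : N < Fintype.card V)
    {f : Fin N → V} (hf : Function.Injective f) {i j : Fin N} (hij : i ≠ j) :
    Reach G blocks f (f ∘ (Equiv.swap i j)) := by
  obtain ⟨v, hv⟩ := exists_vacant hN
  obtain ⟨wk⟩ : Nonempty (G.Walk v (f i)) := hconn.preconnected v (f i)
  obtain ⟨f0, r0, hf0, B, hB, hiB, y, hyB, hy⟩ := holeToBlock hpart hcard hadj wk f hf rfl hv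
  obtain ⟨wk2⟩ : Nonempty (G.Walk (f0 i) (f0 j)) := hconn.preconnected (f0 i) (f0 j)
  obtain ⟨g, rg, hg, hsh⟩ := main hpart hcard hadj hij wk2 f0 hf0 rfl B hB hiB hiB ⟨y, hyB, hy⟩
  have h1 : Reach G blocks f g := r0.trans rg
  have h2 : Reach G blocks g (g ∘ (Equiv.swap i j)) := swap_shape_reach hadj hg hij hsh
  have h3 : Reach G blocks (f ∘ (Equiv.swap i j)) (g ∘ (Equiv.swap i j)) := reach_comp h1 _
  have h4 : Reach G blocks (g ∘ (Equiv.swap i j)) (f ∘ (Equiv.swap i j)) :=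
    reach_symm h3 (hf.comp (Equiv.injective _))
  exact (h1.trans h2).trans h4

end MPP3

theorem three_loop_graph_mpp_feasible' {V : Type*} [Fintype V] [DecidableEq V]
    (G : SimpleGraph V) (hconn : G.Connected)
    (blocks : Finset (Finset V))
    (hpart : ∀ v : V, ∃! B, B ∈ blocks ∧ v ∈ B)
    (hcard : ∀ B ∈ blocks, B.card = 3)
    (hadj : ∀ B ∈ blocks, ∀ a ∈ B, ∀ b ∈ B, a ≠ b → G.Adj a b)
    {N : ℕ} (hN : N < Fintype.card V)
    (f : Fin N → V) (hf : Function.Injective f)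
    (σ : Equiv.Perm (Fin N)) :
    Relation.ReflTransGen (Move G blocks) f (f ∘ σ) := by
  suffices h : ∀ σ : Equiv.Perm (Fin N), ∀ f : Fin N → V, Function.Injective f →
      Relation.ReflTransGen (Move G blocks) f (f ∘ σ) from h σ f hf
  intro σ
  refine Equiv.Perm.swap_induction_on σ ?_ ?_
  · intro f hf
    have he : f ∘ ⇑(1 : Equiv.Perm (Fin N)) = f := by funext l; simp
    rw [he]
  · intro σ' x y hxy ih f hf
    have hcomp : f ∘ ⇑(Equiv.swap x y * σ') = (f ∘ ⇑(Equiv.swap x y)) ∘ ⇑σ' := by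
      funext l; simp [Equiv.Perm.mul_apply]
    rw [hcomp]
    exact (MPP3.reach_swap hconn hpart hcard hadj hN hf hxy).trans
      (ih (f ∘ ⇑(Equiv.swap x y)) (hf.comp (Equiv.injective _)))

/-- On a 3-loop graph (a finite connected simple graph whose vertex set is partitioned into
pairwise-adjacent blocks of exactly 3 vertices) with at least 2 blocks, any MPP instance with
`N < |V|` robots is feasible: every permuted configuration `f ∘ σ` is reachable from `f`. -/
theorem three_loop_graph_mpp_feasible {V : Type*} [Fintype V] [DecidableEq V]
    (G : SimpleGraph V) (hconn : G.Connected)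
    (blocks : Finset (Finset V))
    (hpart : ∀ v : V, ∃! B, B ∈ blocks ∧ v ∈ B)
    (hcard : ∀ B ∈ blocks, B.card = 3)
    (hadj : ∀ B ∈ blocks, ∀ a ∈ B, ∀ b ∈ B, a ≠ b → G.Adj a b)
    (hblocks : 2 ≤ blocks.card)
    {N : ℕ} (hN : N < Fintype.card V)
    (f : Fin N → V) (hf : Function.Injective f)
    (σ : Equiv.Perm (Fin N)) :
    Relation.ReflTransGen (Move G blocks) f (f ∘ σ) := by
  exact three_loop_graph_mpp_feasible' G hconn blocks hpart hcard hadj hN f hf σ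
end

section
/- Let G = (V, E) be a finite connected simple graph and let f : Fin N → V be an injective configuration of N robots with N < |V|. Then for every vertex v ∈ V there is a configuration g reachable from f using vacant moves only (a vacant move sends one robot along an edge to a currently unoccupied vertex, all other robots fixed) such that v is not in the range of g, i.e. the vacancy can be relocated to any prescribed vertex. -/
private lemma vacancy_walk {V : Type*} (G : SimpleGraph V) {N : ℕ} :
    ∀ {u v : V} (_ : G.Walk u v) (f : Fin N → V), Function.Injective f → (∀ k, f k ≠ u) →
    ∃ g : Fin N → V, Relation.ReflTransGen (VacantMove G) f g ∧ ∀ k, g k ≠ v := by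
  intro u v p
  induction p with
  | nil => intro f _ hu; exact ⟨f, .refl, hu⟩
  | @cons a b c h q ih =>
    intro f hf hu
    by_cases hw : ∀ k, f k ≠ b
    · obtain ⟨g, hg1, hg2⟩ := ih f hf hw
      exact ⟨g, hg1, hg2⟩
    · push_neg at hw
      obtain ⟨i, hi⟩ := hw
      set g := Function.update f i a with hgdef
      have hgi : g i = a := Function.update_self i a f
      have hgk : ∀ k, k ≠ i → g k = f k := fun k hk => Function.update_of_ne hk a f
      have hmove : VacantMove G f g := by
        refine ⟨i, a, ?_, hu, hgi, hgk⟩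
        rw [hi]; exact h.symm
      have hginj : Function.Injective g := by
        intro x y hxy
        by_cases hx : x = i <;> by_cases hy : y = i
        · rw [hx, hy]
        · exfalso; rw [hx, hgi, hgk y hy] at hxy
          exact hu y hxy.symm
        · exfalso; rw [hy, hgi, hgk x hx] at hxy
          exact hu x hxy
        · exact hf (by rwa [hgk x hx, hgk y hy] at hxy)
      have hgb : ∀ k, g k ≠ b := by
        intro k
        by_cases hk : k = i
        · rw [hk, hgi]; exact h.ne
        · rw [hgk k hk]
          intro hcontra
          exact hk (hf (hcontra.trans hi.symm))
      obtain ⟨g', hg1, hg2⟩ := ih g hginj hgb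
      exact ⟨g', Relation.ReflTransGen.head hmove hg1, hg2⟩

/-- On a finite connected simple graph with `N < |V|` robots, the vacancy can be relocated
to any prescribed vertex using vacant moves only: from any injective configuration `f` and
any vertex `v`, some configuration `g` avoiding `v` is reachable by vacant moves. -/
theorem vacancy_relocation {V : Type*} [Fintype V]
    (G : SimpleGraph V) (hconn : G.Connected)
    {N : ℕ} (hN : N < Fintype.card V)
    (f : Fin N → V) (hf : Function.Injective f) (v : V) :
    ∃ g : Fin N → V,
      Relation.ReflTransGen (VacantMove G) f g ∧ ∀ k, g k ≠ v := by
  have hcard : (Set.range f) ≠ Set.univ := by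
    intro hcontra
    have := Set.finite_univ (α := V)
    have h1 : Fintype.card V ≤ N := by
      have := Fintype.card_le_of_surjective f (fun y => by
        have : y ∈ Set.range f := hcontra ▸ Set.mem_univ y
        exact this)
      simpa using this
    omega
  obtain ⟨u, hu⟩ : ∃ u : V, ∀ k, f k ≠ u := by
    by_contra hno
    push_neg at hno
    exact hcard (Set.eq_univ_of_forall fun y => (hno y).imp fun k hk => hk)
  obtain ⟨p⟩ := hconn u v
  exact vacancy_walk G p f hf hu
end

section
/- Let G = (V, E) be a 3-loop graph (finite connected simple graph whose vertices are partitioned into pairwise-adjacent blocks of size 3) with at least 2 blocks, and let f : Fin N → V be an injective configuration with N < |V|. Then for any two distinct robot indices i, j such that {f(i), f(j)} ∈ E, there is a configuration g reachable from f by a finite sequence of vacant moves and cyclic moves with g(i) = f(j), g(j) = f(i), and g(k) = f(k) for all k ∉ {i, j}; i.e. any two robots on adjacent vertices can be swapped while restoring the positions of all other robots. -/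
set_option linter.unusedSectionVars false

section Infra
variable {V : Type*} [DecidableEq V] {G : SimpleGraph V} {blocks : Finset (Finset V)} {N : ℕ}

abbrev Reach (G : SimpleGraph V) (blocks : Finset (Finset V)) (f g : Fin N → V) : Prop :=
  Relation.ReflTransGen (Move G blocks) f g

lemma vac_move' {f g : Fin N → V} (m : Fin N) (v : V)
    (ha : G.Adj (f m) v) (hv : ∀ k, f k ≠ v) (hm : g m = v)
    (ho : ∀ k, k ≠ m → g k = f k) : Move G blocks f g :=
  Or.inl ⟨m, v, ha, hv, hm, ho⟩

lemma cyc_move' {f g : Fin N → V} (p q r : Fin N) (hpq : p ≠ q) (hqr : q ≠ r) (hpr : p ≠ r)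
    (hB : ({f p, f q, f r} : Finset V) ∈ blocks)
    (h1 : g p = f q) (h2 : g q = f r) (h3 : g r = f p)
    (ho : ∀ l, l ≠ p → l ≠ q → l ≠ r → g l = f l) : Move G blocks f g :=
  Or.inr ⟨p, q, r, hpq, hqr, hpr, hB, Or.inl ⟨h1, h2, h3⟩, ho⟩

lemma move_inj {f g : Fin N → V} (h : Move G blocks f g) (hf : Function.Injective f) :
    Function.Injective g := by
  rcases h with ⟨m, v, ha, hv, hm, ho⟩ | ⟨p, q, r, hpq, hqr, hpr, hB, hd, ho⟩
  · intro k₁ k₂ he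
    by_cases h1 : k₁ = m <;> by_cases h2 : k₂ = m
    · rw [h1, h2]
    · subst h1; rw [hm, ho k₂ h2] at he; exact absurd he.symm (hv k₂)
    · subst h2; rw [hm, ho k₁ h1] at he; exact absurd he (hv k₁)
    · exact hf ((ho k₁ h1).symm.trans (he.trans (ho k₂ h2)))
  · rcases hd with ⟨h1, h2, h3⟩ | ⟨h1, h2, h3⟩
    · set c : Fin N → Fin N := fun l => if l = p then q else if l = q then r else if l = r then p else l with hc
      have hg : ∀ l, g l = f (c l) := by
        intro l
        by_cases e1 : l = p
        · subst e1; simp [hc, h1]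
        · by_cases e2 : l = q
          · subst e2; simp [hc, e1, h2]
          · by_cases e3 : l = r
            · subst e3; simp [hc, e1, e2, h3]
            · simp [hc, e1, e2, e3, ho l e1 e2 e3]
      have hcinj : Function.Injective c := by
        intro a b hab
        simp only [hc] at hab
        split_ifs at hab <;> simp_all
      intro k₁ k₂ he
      rw [hg k₁, hg k₂] at he
      exact hcinj (hf he)
    · set c : Fin N → Fin N := fun l => if l = p then r else if l = q then p else if l = r then q else l with hc
      have hg : ∀ l, g l = f (c l) := by
        intro l
        by_cases e1 : l = p
        · subst e1; simp [hc, h1]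
        · by_cases e2 : l = q
          · subst e2; simp [hc, e1, h2]
          · by_cases e3 : l = r
            · subst e3; simp [hc, e1, e2, h3]
            · simp [hc, e1, e2, e3, ho l e1 e2 e3]
      have hcinj : Function.Injective c := by
        intro a b hab
        simp only [hc] at hab
        split_ifs at hab <;> simp_all
      intro k₁ k₂ he
      rw [hg k₁, hg k₂] at he
      exact hcinj (hf he)

lemma move_symm {f g : Fin N → V} (hf : Function.Injective f) (h : Move G blocks f g) :
    Move G blocks g f := by
  rcases h with ⟨m, v, ha, hv, hm, ho⟩ | ⟨p, q, r, hpq, hqr, hpr, hB, hd, ho⟩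
  · refine Or.inl ⟨m, f m, by rw [hm]; exact ha.symm, ?_, rfl, fun k hk => (ho k hk).symm⟩
    intro k
    by_cases hk : k = m
    · subst hk; rw [hm]; exact ha.ne.symm
    · rw [ho k hk]; exact fun he => hk (hf he)
  · have hset : ({g p, g q, g r} : Finset V) = {f p, f q, f r} := by
      rcases hd with ⟨h1, h2, h3⟩ | ⟨h1, h2, h3⟩ <;> rw [h1, h2, h3] <;> ext x <;> simp <;> tauto
    refine Or.inr ⟨p, q, r, hpq, hqr, hpr, hset ▸ hB, ?_, fun l e1 e2 e3 => (ho l e1 e2 e3).symm⟩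
    rcases hd with ⟨h1, h2, h3⟩ | ⟨h1, h2, h3⟩
    · exact Or.inr ⟨h3.symm, h1.symm, h2.symm⟩
    · exact Or.inl ⟨h2.symm, h3.symm, h1.symm⟩

lemma reach_inj {f g : Fin N → V} (h : Reach G blocks f g) (hf : Function.Injective f) :
    Function.Injective g := by
  induction h with
  | refl => exact hf
  | tail _ hmv ih => exact move_inj hmv ih

lemma reach_symm {f g : Fin N → V} (h : Reach G blocks f g) (hf : Function.Injective f) :
    Reach G blocks g f := by
  induction h with
  | refl => exact .refl
  | tail hr hmv ih =>
      exact Relation.ReflTransGen.head (move_symm (reach_inj hr hf) hmv) ih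

def shift : {u x : V} → G.Walk u x → V → V
  | _, _, SimpleGraph.Walk.nil => id
  | u, _, @SimpleGraph.Walk.cons _ _ _ v _ _ p => fun z => if z = v then u else shift p z

lemma shift_of_not_mem_support : ∀ {u x : V} (w : G.Walk u x) {z : V},
    z ∉ w.support → shift w z = z
  | _, _, SimpleGraph.Walk.nil, z, _ => rfl
  | u, _, @SimpleGraph.Walk.cons _ _ _ v _ h p, z, hz => by
      have hzv : z ≠ v := by
        intro he; exact hz (by rw [SimpleGraph.Walk.support_cons]; exact List.mem_cons_of_mem _ (he ▸ p.start_mem_support))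
      have hz' : z ∉ p.support := fun hm => hz (by rw [SimpleGraph.Walk.support_cons]; exact List.mem_cons_of_mem _ hm)
      simp only [shift, if_neg hzv]
      exact shift_of_not_mem_support p hz'

lemma shift_ne_end : ∀ {u x : V} (w : G.Walk u x), w.support.Nodup → ∀ z, z ≠ u → shift w z ≠ x
  | _, _, SimpleGraph.Walk.nil, _, z, hz => hz
  | u, x, @SimpleGraph.Walk.cons _ _ _ v _ h p, hnd, z, hz => by
      have hup : u ∉ p.support := by
        rw [SimpleGraph.Walk.support_cons] at hnd; exact (List.nodup_cons.mp hnd).1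
      have hnd' : p.support.Nodup := by
        rw [SimpleGraph.Walk.support_cons] at hnd; exact (List.nodup_cons.mp hnd).2
      by_cases hzv : z = v
      · simp only [shift, if_pos hzv]
        exact fun he => hup (he ▸ p.end_mem_support)
      · simp only [shift, if_neg hzv]
        exact shift_ne_end p hnd' z hzv

lemma shift_mem_or_eq : ∀ {u x : V} (w : G.Walk u x) (z : V),
    shift w z ∈ w.support ∨ shift w z = z
  | _, _, SimpleGraph.Walk.nil, z => Or.inr rfl
  | u, _, @SimpleGraph.Walk.cons _ _ _ v _ h p, z => by
      by_cases hzv : z = v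
      · simp only [shift, if_pos hzv]
        exact Or.inl (SimpleGraph.Walk.start_mem_support _)
      · simp only [shift, if_neg hzv]
        rcases shift_mem_or_eq p z with hm | he
        · exact Or.inl (by rw [SimpleGraph.Walk.support_cons]; exact List.mem_cons_of_mem _ hm)
        · exact Or.inr he

lemma upd_inj {f : Fin N → V} (hf : Function.Injective f) {m : Fin N} {u : V}
    (hu : ∀ k, f k ≠ u) : Function.Injective (fun k => if k = m then u else f k) := by
  intro k₁ k₂ he
  simp only at he
  by_cases h1 : k₁ = m <;> by_cases h2 : k₂ = m
  · rw [h1, h2]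
  · rw [if_pos h1, if_neg h2] at he; exact absurd he.symm (hu k₂)
  · rw [if_neg h1, if_pos h2] at he; exact absurd he (hu k₁)
  · rw [if_neg h1, if_neg h2] at he; exact hf he

lemma transport_reach : ∀ {u x : V} (w : G.Walk u x) (f : Fin N → V), w.support.Nodup →
    Function.Injective f → (∀ k, f k ≠ u) → Reach G blocks f (fun k => shift w (f k))
  | _, _, SimpleGraph.Walk.nil, f, _, _, _ => Relation.ReflTransGen.refl
  | u, x, @SimpleGraph.Walk.cons _ _ _ v _ h p, f, hnd, hf, hu => by
      have hup : u ∉ p.support := by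
        rw [SimpleGraph.Walk.support_cons] at hnd; exact (List.nodup_cons.mp hnd).1
      have hnd' : p.support.Nodup := by
        rw [SimpleGraph.Walk.support_cons] at hnd; exact (List.nodup_cons.mp hnd).2
      by_cases hv : ∃ m, f m = v
      · obtain ⟨m, hm⟩ := hv
        set f₁ : Fin N → V := fun k => if k = m then u else f k with hf₁
        have mv : Move G blocks f f₁ :=
          vac_move' m u (hm ▸ h.symm) hu (if_pos rfl) (fun k hk => if_neg hk)
        have hf₁inj : Function.Injective f₁ := upd_inj hf hu
        have hvac₁ : ∀ k, f₁ k ≠ v := by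
          intro k
          by_cases hk : k = m
          · simp only [hf₁, if_pos hk]; exact h.ne
          · simp only [hf₁, if_neg hk]
            exact fun he => hk (hf (he.trans hm.symm))
        have ih := transport_reach p f₁ hnd' hf₁inj hvac₁
        have heq : (fun k => shift (SimpleGraph.Walk.cons h p) (f k)) = (fun k => shift p (f₁ k)) := by
          funext k
          by_cases hk : k = m
          · subst hk
            simp only [shift, if_pos hm, hf₁, if_pos rfl]
            exact (shift_of_not_mem_support p hup).symm
          · have : f k ≠ v := fun he => hk (hf (he.trans hm.symm))
            simp only [shift, if_neg this, hf₁, if_neg hk]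
        rw [heq]
        exact Relation.ReflTransGen.head mv ih
      · push_neg at hv
        have ih := transport_reach p f hnd' hf hv
        have heq : (fun k => shift (SimpleGraph.Walk.cons h p) (f k)) = (fun k => shift p (f k)) := by
          funext k
          simp only [shift, if_neg (hv k)]
        rw [heq]
        exact ih

lemma trim_walk (S : Finset V) : ∀ {u y : V} (w : G.Walk u y), w.support.Nodup →
    u ∉ S → y ∈ S → ∃ (x : V) (w' : G.Walk u x), x ∈ S ∧ w'.support.Nodup ∧
    (∀ z ∈ w'.support, z ∈ S → z = x) ∧ (∀ z ∈ w'.support, z ∈ w.support)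
  | u, _, SimpleGraph.Walk.nil, _, hu, hy => absurd hy hu
  | u, y, @SimpleGraph.Walk.cons _ _ _ v _ h p, hnd, hu, hy => by
      have hup : u ∉ p.support := by
        rw [SimpleGraph.Walk.support_cons] at hnd; exact (List.nodup_cons.mp hnd).1
      have hnd' : p.support.Nodup := by
        rw [SimpleGraph.Walk.support_cons] at hnd; exact (List.nodup_cons.mp hnd).2
      by_cases hvS : v ∈ S
      · refine ⟨v, SimpleGraph.Walk.cons h SimpleGraph.Walk.nil, hvS, ?_, ?_, ?_⟩
        · simp [h.ne]
        · intro z hz hzS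
          simp only [SimpleGraph.Walk.support_cons, SimpleGraph.Walk.support_nil,
            List.mem_cons, List.mem_singleton] at hz
          rcases hz with rfl | rfl | hz
          · exact absurd hzS hu
          · rfl
          · simp at hz
        · intro z hz
          simp only [SimpleGraph.Walk.support_cons, SimpleGraph.Walk.support_nil,
            List.mem_cons, List.mem_singleton] at hz ⊢
          rcases hz with rfl | rfl | hz
          · exact Or.inl rfl
          · exact Or.inr p.start_mem_support
          · simp at hz
      · obtain ⟨x, w', hxS, hw'nd, hw'S, hw'sub⟩ := trim_walk S p hnd' hvS hy
        refine ⟨x, SimpleGraph.Walk.cons h w', hxS, ?_, ?_, ?_⟩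
        · rw [SimpleGraph.Walk.support_cons]
          exact List.nodup_cons.mpr ⟨fun hm => hup (hw'sub u hm), hw'nd⟩
        · intro z hz hzS
          rw [SimpleGraph.Walk.support_cons] at hz
          rcases List.mem_cons.mp hz with rfl | hz
          · exact absurd hzS hu
          · exact hw'S z hz hzS
        · intro z hz
          rw [SimpleGraph.Walk.support_cons] at hz ⊢
          rcases List.mem_cons.mp hz with rfl | hz
          · exact List.mem_cons_self
          · exact List.mem_cons_of_mem _ (hw'sub z hz)

lemma last_split : ∀ {u x : V} (w : G.Walk u x), ¬ w.Nil →
    ∃ (y : V) (w₁ : G.Walk u y), G.Adj y x ∧ w.support = w₁.support ++ [x]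
  | u, _, SimpleGraph.Walk.nil, hn => absurd SimpleGraph.Walk.nil_nil hn
  | u, x, @SimpleGraph.Walk.cons _ _ _ v _ h p, _ => by
      by_cases hp : p.Nil
      · have hvx : v = x := hp.eq
        subst hvx
        refine ⟨u, SimpleGraph.Walk.nil, h, ?_⟩
        rw [SimpleGraph.Walk.support_cons, hp.eq_nil]
        rfl
      · obtain ⟨y, w₁, hadj, heq⟩ := last_split p hp
        refine ⟨y, SimpleGraph.Walk.cons h w₁, hadj, ?_⟩
        rw [SimpleGraph.Walk.support_cons, heq, SimpleGraph.Walk.support_cons]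
        rfl

lemma tri_swap {f : Fin N → V} (hf : Function.Injective f) {p q : Fin N} (hpq : p ≠ q)
    {a b c : V} (hp : f p = a) (hq : f q = b) (hc : ∀ k, f k ≠ c)
    (hac : G.Adj a c) (hba : G.Adj b a) (hcb : G.Adj c b) :
    Reach G blocks f (fun k => if k = p then b else if k = q then a else f k) := by
  have hqp : q ≠ p := hpq.symm
  set f₁ : Fin N → V := fun k => if k = p then c else f k with hf₁
  set f₂ : Fin N → V := fun k => if k = q then a else f₁ k with hf₂
  set f₃ : Fin N → V := fun k => if k = p then b else f₂ k with hf₃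
  have e₁p : f₁ p = c := if_pos rfl
  have e₁ : ∀ k, k ≠ p → f₁ k = f k := fun k hk => if_neg hk
  have e₂q : f₂ q = a := if_pos rfl
  have e₂ : ∀ k, k ≠ q → f₂ k = f₁ k := fun k hk => if_neg hk
  have mv1 : Move G blocks f f₁ := vac_move' p c (hp ▸ hac) hc e₁p e₁
  have mv2 : Move G blocks f₁ f₂ := by
    refine vac_move' q a ?_ ?_ e₂q e₂
    · rw [e₁ q hqp, hq]; exact hba
    · intro k
      by_cases hk : k = p
      · subst hk; rw [e₁p]; exact hac.ne'
      · rw [e₁ k hk]; exact fun he => hk (hf (he.trans hp.symm))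
  have mv3 : Move G blocks f₂ f₃ := by
    refine vac_move' p b ?_ ?_ (if_pos rfl) (fun k hk => if_neg hk)
    · rw [e₂ p hpq, e₁p]; exact hcb
    · intro k
      by_cases hk1 : k = q
      · subst hk1; rw [e₂q]
        exact fun he => hpq (hf (hp.trans (he.trans hq.symm)))
      · rw [e₂ k hk1]
        by_cases hk2 : k = p
        · subst hk2; rw [e₁p]; exact hcb.ne
        · rw [e₁ k hk2]; exact fun he => hk1 (hf (he.trans hq.symm))
  have hfin : f₃ = (fun k => if k = p then b else if k = q then a else f k) := by
    funext k
    by_cases hk1 : k = p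
    · subst hk1; simp [hf₃]
    · by_cases hk2 : k = q
      · subst hk2; rw [if_neg hk1, if_pos rfl, hf₃]
        simp only [if_neg hk1, e₂q]
      · rw [if_neg hk1, if_neg hk2, hf₃]
        simp only [if_neg hk1, e₂ k hk2, e₁ k hk1]
  rw [← hfin]
  exact Relation.ReflTransGen.head mv1 (Relation.ReflTransGen.head mv2
    (Relation.ReflTransGen.head mv3 Relation.ReflTransGen.refl))

lemma exists_vacant [Fintype V] (hN : N < Fintype.card V) (f : Fin N → V) :
    ∃ u, ∀ k, f k ≠ u := by
  by_contra h
  push_neg at h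
  have hsurj : Function.Surjective f := by
    intro u
    obtain ⟨k, hk⟩ := h u
    exact ⟨k, hk⟩
  have := Fintype.card_le_of_surjective f hsurj
  simp only [Fintype.card_fin] at this
  omega

lemma third_elem {B : Finset V} (hB3 : B.card = 3) {a b : V} (ha : a ∈ B) (hb : b ∈ B)
    (hab : a ≠ b) : ∃ c ∈ B, c ≠ a ∧ c ≠ b := by
  have hsub : ({a, b} : Finset V) ⊆ B := by
    intro z hz; simp only [Finset.mem_insert, Finset.mem_singleton] at hz
    rcases hz with rfl | rfl <;> assumption
  have hcard : (B \ {a, b}).card = 1 := by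
    rw [Finset.card_sdiff_of_subset hsub, hB3, Finset.card_insert_of_notMem (by simpa using hab),
      Finset.card_singleton]
  obtain ⟨c, hc⟩ := Finset.card_eq_one.mp hcard
  have hcB : c ∈ B \ {a, b} := hc ▸ Finset.mem_singleton_self c
  rw [Finset.mem_sdiff] at hcB
  refine ⟨c, hcB.1, ?_, ?_⟩ <;> intro h <;> apply hcB.2 <;> simp [h]

lemma eq_triple {B : Finset V} (hB3 : B.card = 3) {a b c : V} (ha : a ∈ B) (hb : b ∈ B)
    (hc : c ∈ B) (hab : a ≠ b) (hac : a ≠ c) (hbc : b ≠ c) : B = {a, b, c} := by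
  have hsub : ({a, b, c} : Finset V) ⊆ B := by
    intro z hz; simp only [Finset.mem_insert, Finset.mem_singleton] at hz
    rcases hz with rfl | rfl | rfl <;> assumption
  have hcard : ({a, b, c} : Finset V).card = 3 := by
    rw [Finset.card_insert_of_notMem (by simp [hab, hac]),
      Finset.card_insert_of_notMem (by simpa using hbc), Finset.card_singleton]
  exact (Finset.eq_of_subset_of_card_le hsub (by rw [hB3, hcard])).symm

lemma swap_fun_inj {f : Fin N → V} (hf : Function.Injective f) (p q : Fin N) :
    Function.Injective (fun k => if k = p then f q else if k = q then f p else f k) := by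
  intro k₁ k₂ h
  simp only at h
  split_ifs at h <;> simp_all [hf.eq_iff]

lemma fb {h : Fin N → V} (hinj : Function.Injective h) {p q : Fin N} (hpq : p ≠ q)
    {α β γ u : V} {W : G.Walk u α}
    (hWnd : W.support.Nodup) (hu : ∀ k, h k ≠ u) (hβ : h p = β) (hγ : h q = γ)
    (hβW : β ∉ W.support) (hγW : γ ∉ W.support)
    (adj1 : G.Adj β α) (adj2 : G.Adj γ β) (adj3 : G.Adj α γ) :
    Reach G blocks h (fun k => if k = p then γ else if k = q then β else h k) := by
  have r1 : Reach G blocks h (fun k => shift W (h k)) := transport_reach W h hWnd hinj hu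
  set g₁ : Fin N → V := fun k => shift W (h k) with hg₁
  have hg₁inj : Function.Injective g₁ := reach_inj r1 hinj
  have hg₁p : g₁ p = β := by rw [hg₁]; simp only; rw [hβ, shift_of_not_mem_support W hβW]
  have hg₁q : g₁ q = γ := by rw [hg₁]; simp only; rw [hγ, shift_of_not_mem_support W hγW]
  have hole : ∀ k, g₁ k ≠ α := fun k => shift_ne_end W hWnd (h k) (hu k)
  have r2 : Reach G blocks g₁ (fun k => if k = p then γ else if k = q then β else g₁ k) :=
    tri_swap hg₁inj hpq hg₁p hg₁q hole adj1 adj2 adj3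
  set h' : Fin N → V := fun k => if k = p then γ else if k = q then β else h k with hh'
  have hh'inj : Function.Injective h' := by
    have : h' = (fun k => if k = p then h q else if k = q then h p else h k) := by
      funext k; rw [hh']; simp only [hβ, hγ]
    rw [this]
    exact swap_fun_inj hinj p q
  have hh'u : ∀ k, h' k ≠ u := by
    intro k
    rw [hh']
    simp only
    split_ifs
    · rw [← hγ]; exact hu q
    · rw [← hβ]; exact hu p
    · exact hu k
  have r3 : Reach G blocks h' (fun k => shift W (h' k)) :=
    transport_reach W h' hWnd hh'inj hh'u
  have heq : (fun k => shift W (h' k)) = (fun k => if k = p then γ else if k = q then β else g₁ k) := by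
    funext k
    rw [hh', hg₁]
    simp only
    split_ifs
    · exact shift_of_not_mem_support W hγW
    · exact shift_of_not_mem_support W hβW
    · rfl
  rw [heq] at r3
  exact r1.trans (r2.trans (reach_symm r3 hh'inj))

lemma block_swap [Fintype V] (hconn : G.Connected)
    (hcard3 : ∀ B ∈ blocks, B.card = 3)
    (hadjB : ∀ B ∈ blocks, ∀ a ∈ B, ∀ b ∈ B, a ≠ b → G.Adj a b)
    (hN : N < Fintype.card V)
    {f : Fin N → V} (hf : Function.Injective f) {p q : Fin N} (hpq : p ≠ q)
    {B : Finset V} (hB : B ∈ blocks) (hfp : f p ∈ B) (hfq : f q ∈ B) :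
    ∃ g, Reach G blocks f g ∧ g p = f q ∧ g q = f p ∧ ∀ k, k ≠ p → k ≠ q → g k = f k := by
  have hab : f p ≠ f q := fun he => hpq (hf he)
  obtain ⟨c, hcB, hca, hcb⟩ := third_elem (hcard3 B hB) hfp hfq hab
  have adjpq : G.Adj (f p) (f q) := hadjB B hB _ hfp _ hfq hab
  have adjpc : G.Adj (f p) c := hadjB B hB _ hfp _ hcB (Ne.symm hca)
  have adjqc : G.Adj (f q) c := hadjB B hB _ hfq _ hcB (Ne.symm hcb)
  have hqp : q ≠ p := hpq.symm
  by_cases hcc : ∃ r, f r = c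
  · obtain ⟨r, hr⟩ := hcc
    have hrp : r ≠ p := fun he => hca (hr.symm.trans (congrArg f he))
    have hrq : r ≠ q := fun he => hcb (hr.symm.trans (congrArg f he))
    have hBtriple : B = {f p, f q, c} := eq_triple (hcard3 B hB) hfp hfq hcB hab (Ne.symm hca) (Ne.symm hcb)
    obtain ⟨u, hu⟩ := exists_vacant hN f
    have huS : u ∉ ({f p, f q, c} : Finset V) := by
      simp only [Finset.mem_insert, Finset.mem_singleton]
      push_neg
      exact ⟨fun he => hu p he.symm, fun he => hu q he.symm, fun he => hu r (hr.trans he.symm)⟩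
    set W₀ := ((hconn.preconnected u (f p)).some.toPath : G.Path u (f p)) with hW₀def
    have hW₀nd : W₀.1.support.Nodup := W₀.2.support_nodup
    obtain ⟨x, W, hxS, hWnd, hWS, -⟩ := trim_walk ({f p, f q, c} : Finset V) W₀.1 hW₀nd huS
      (by simp)
    have hnm : ∀ z, z ∈ ({f p, f q, c} : Finset V) → z ≠ x → z ∉ W.support :=
      fun z hz hzx hm => hzx (hWS z hm hz)
    have hqr : q ≠ r := hrq.symm
    have hpr : p ≠ r := hrp.symm
    have hxmem : x = f p ∨ x = f q ∨ x = c := by simpa using hxS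
    rcases hxmem with hx | hx | hx
    · -- x = f p : pre-rotate p→(f q), q→c, r→(f p)
      subst hx
      set g₁ : Fin N → V := fun k => if k = p then f q else if k = q then c else if k = r then f p else f k with hg₁
      have mv₁ : Move G blocks f g₁ := by
        refine cyc_move' p q r hpq hqr hpr ?_ (by simp [hg₁]) ?_ ?_ ?_
        · rw [hr, ← hBtriple]; exact hB
        · simp [hg₁, hqp, hr]
        · simp [hg₁, hrp, hrq]
        · intro l h1 h2 h3; simp [hg₁, h1, h2, h3]
      have inj₁ : Function.Injective g₁ := move_inj mv₁ hf
      have hu₁ : ∀ k, g₁ k ≠ u := by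
        intro k; simp only [hg₁]
        split_ifs
        · exact hu q
        · exact hr ▸ hu r
        · exact hu p
        · exact hu k
      have hβW : f q ∉ W.support := hnm (f q) (by simp) (fun he => hab he.symm)
      have hγW : c ∉ W.support := hnm c (by simp) hca
      have rFB := fb (G := G) (blocks := blocks) inj₁ hpq hWnd hu₁
        (by simp [hg₁] : g₁ p = f q) (by simp [hg₁, hqp] : g₁ q = c) hβW hγW
        adjpq.symm adjqc.symm adjpc
      set F : Fin N → V := fun k => if k = p then c else if k = q then f q else g₁ k with hF
      set fh : Fin N → V := fun k => if k = p then f q else if k = q then f p else if k = r then c else f k with hfh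
      have mv₂ : Move G blocks F fh := by
        refine cyc_move' p q r hpq hqr hpr ?_ ?_ ?_ ?_ ?_
        · have hset : ({F p, F q, F r} : Finset V) = {f p, f q, c} := by
            have h1 : F p = c := by simp [hF]
            have h2 : F q = f q := by simp [hF, hqp]
            have h3 : F r = f p := by simp [hF, hrp, hrq, hg₁]
            rw [h1, h2, h3]; ext z; simp; tauto
          rw [hset, ← hBtriple]; exact hB
        · simp [hfh, hF, hqp]
        · simp [hfh, hF, hqp, hrp, hrq, hg₁]
        · simp [hfh, hF, hrp, hrq]
        · intro l h1 h2 h3; simp [hfh, hF, hg₁, h1, h2, h3]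
      refine ⟨fh, Relation.ReflTransGen.head mv₁ (rFB.tail mv₂), ?_, ?_, ?_⟩
      · simp [hfh]
      · simp [hfh, hqp]
      · intro k h1 h2
        by_cases h3 : k = r
        · subst h3; simp [hfh, hrp, hrq, hr]
        · simp [hfh, h1, h2, h3]
    · -- x = f q : pre-rotate p→c, q→(f p), r→(f q)
      subst hx
      set g₁ : Fin N → V := fun k => if k = p then c else if k = q then f p else if k = r then f q else f k with hg₁
      have mv₁ : Move G blocks f g₁ := by
        refine cyc_move' p r q hpr hqr.symm hpq ?_ ?_ ?_ ?_ ?_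
        · have hset : ({f p, f r, f q} : Finset V) = {f p, f q, c} := by
            rw [hr]; ext z; simp; tauto
          rw [hset, ← hBtriple]; exact hB
        · simp [hg₁, hr]
        · simp [hg₁, hrp, hrq]
        · simp [hg₁, hqp]
        · intro l h1 h2 h3; simp [hg₁, h1, h3, h2]
      have inj₁ : Function.Injective g₁ := move_inj mv₁ hf
      have hu₁ : ∀ k, g₁ k ≠ u := by
        intro k; simp only [hg₁]
        split_ifs
        · exact hr ▸ hu r
        · exact hu p
        · exact hu q
        · exact hu k
      have hβW : c ∉ W.support := hnm c (by simp) hcb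
      have hγW : f p ∉ W.support := hnm (f p) (by simp) hab
      have rFB := fb (G := G) (blocks := blocks) inj₁ hpq hWnd hu₁
        (by simp [hg₁] : g₁ p = c) (by simp [hg₁, hqp] : g₁ q = f p) hβW hγW
        adjqc.symm adjpc adjpq.symm
      set F : Fin N → V := fun k => if k = p then f p else if k = q then c else g₁ k with hF
      set fh : Fin N → V := fun k => if k = p then f q else if k = q then f p else if k = r then c else f k with hfh
      have mv₂ : Move G blocks F fh := by
        refine cyc_move' p r q hpr hqr.symm hpq ?_ ?_ ?_ ?_ ?_
        · have hset : ({F p, F r, F q} : Finset V) = {f p, f q, c} := by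
            have h1 : F p = f p := by simp [hF]
            have h2 : F r = f q := by simp [hF, hrp, hrq, hg₁]
            have h3 : F q = c := by simp [hF, hqp]
            rw [h1, h2, h3]
          rw [hset, ← hBtriple]; exact hB
        · simp [hfh, hF, hrp, hrq, hg₁]
        · simp [hfh, hF, hrp, hrq, hqp]
        · simp [hfh, hF, hqp]
        · intro l h1 h2 h3; simp [hfh, hF, hg₁, h1, h2, h3]
      refine ⟨fh, Relation.ReflTransGen.head mv₁ (rFB.tail mv₂), ?_, ?_, ?_⟩
      · simp [hfh]
      · simp [hfh, hqp]
      · intro k h1 h2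
        by_cases h3 : k = r
        · subst h3; simp [hfh, hrp, hrq, hr]
        · simp [hfh, h1, h2, h3]
    · -- x = c : direct
      subst hx
      have hβW : f p ∉ W.support := hnm (f p) (by simp) (fun he => hca he.symm)
      have hγW : f q ∉ W.support := hnm (f q) (by simp) (fun he => hcb he.symm)
      have rFB := fb (G := G) (blocks := blocks) hf hpq hWnd hu rfl rfl hβW hγW
        adjpc adjpq.symm adjqc.symm
      refine ⟨_, rFB, ?_, ?_, ?_⟩
      · simp
      · simp [hqp]
      · intro k h1 h2; simp [h1, h2]
  · push_neg at hcc
    refine ⟨fun k => if k = p then f q else if k = q then f p else f k,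
      tri_swap hf hpq rfl rfl hcc adjpc adjpq.symm adjqc.symm, ?_, ?_, ?_⟩
    · simp
    · simp [hqp]
    · intro k hk1 hk2; simp [hk1, hk2]

lemma easy₁ [Fintype V] (hconn : G.Connected)
    (hcard3 : ∀ B ∈ blocks, B.card = 3)
    (hadjB : ∀ B ∈ blocks, ∀ a ∈ B, ∀ b ∈ B, a ≠ b → G.Adj a b)
    (hN : N < Fintype.card V)
    {f : Fin N → V} (hf : Function.Injective f) {i j : Fin N} (hij : i ≠ j)
    {B₁ B₂ : Finset V} (hB₁ : B₁ ∈ blocks) (hB₂ : B₂ ∈ blocks)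
    (hiB : f i ∈ B₁) (hjB : f j ∈ B₂) (hAB : G.Adj (f i) (f j))
    {v : V} (hvB : v ∈ B₁) (hvi : v ≠ f i) (hvac : ∀ k, f k ≠ v)
    (hdisj : ∀ z, z ∈ B₁ → z ∈ B₂ → False) :
    ∃ g, Reach G blocks f g ∧ g i = f j ∧ g j = f i ∧ ∀ k, k ≠ i → k ≠ j → g k = f k := by
  have hji : j ≠ i := hij.symm
  have hvj : v ≠ f j := fun he => hdisj v hvB (he ▸ hjB)
  have hABne : f i ≠ f j := hAB.ne
  have adj_av : G.Adj (f i) v := hadjB B₁ hB₁ _ hiB _ hvB hvi.symm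
  set f₁ : Fin N → V := fun k => if k = i then v else f k with hf₁
  have mv₁ : Move G blocks f f₁ := vac_move' i v adj_av hvac (if_pos rfl) (fun k hk => if_neg hk)
  have inj₁ : Function.Injective f₁ := move_inj mv₁ hf
  set f₂ : Fin N → V := fun k => if k = j then f i else f₁ k with hf₂
  have mv₂ : Move G blocks f₁ f₂ := by
    refine vac_move' j (f i) ?_ ?_ (if_pos rfl) (fun k hk => if_neg hk)
    · have : f₁ j = f j := by simp [hf₁, hji]
      rw [this]; exact hAB.symm
    · intro k
      by_cases hk : k = i
      · subst hk; simp [hf₁, hvi]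
      · simp only [hf₁, if_neg hk]
        exact fun he => hk (hf he)
  have inj₂ : Function.Injective f₂ := move_inj mv₂ inj₁
  have hf₂i : f₂ i = v := by simp [hf₂, hf₁, hij]
  have hf₂j : f₂ j = f i := by simp [hf₂]
  obtain ⟨g₃, r₃, e₃i, e₃j, e₃o⟩ := block_swap hconn hcard3 hadjB hN inj₂ hij hB₁
    (hf₂i ▸ hvB) (hf₂j ▸ hiB)
  rw [hf₂i] at e₃j
  rw [hf₂j] at e₃i
  have e₃other : ∀ k, k ≠ i → k ≠ j → g₃ k = f k := by
    intro k h1 h2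
    rw [e₃o k h1 h2]
    simp [hf₂, hf₁, h1, h2]
  set f₄ : Fin N → V := fun k => if k = i then f j else g₃ k with hf₄
  have mv₄ : Move G blocks g₃ f₄ := by
    refine vac_move' i (f j) ?_ ?_ (if_pos rfl) (fun k hk => if_neg hk)
    · rw [e₃i]; exact hAB
    · intro k
      by_cases h1 : k = i
      · subst h1; rw [e₃i]; exact hABne
      · by_cases h2 : k = j
        · subst h2; rw [e₃j]; exact hvj
        · rw [e₃other k h1 h2]; exact fun he => h2 (hf he)
  set f₅ : Fin N → V := fun k => if k = j then f i else f₄ k with hf₅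
  have mv₅ : Move G blocks f₄ f₅ := by
    refine vac_move' j (f i) ?_ ?_ (if_pos rfl) (fun k hk => if_neg hk)
    · have : f₄ j = v := by rw [hf₄]; simp only [if_neg hji]; exact e₃j
      rw [this]
      exact (hadjB B₁ hB₁ _ hvB _ hiB hvi).symm.symm
    · intro k
      by_cases h1 : k = i
      · subst h1; simp only [hf₄, if_pos rfl]; exact hABne.symm
      · by_cases h2 : k = j
        · subst h2; simp only [hf₄, if_neg hji]; rw [e₃j]; exact hvi
        · simp only [hf₄, if_neg h1]; rw [e₃other k h1 h2]
          exact fun he => h1 (hf he)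
  refine ⟨f₅, Relation.ReflTransGen.head mv₁ (Relation.ReflTransGen.head mv₂
    ((r₃.tail mv₄).tail mv₅)), ?_, ?_, ?_⟩
  · simp [hf₅, hf₄, hij]
  · simp [hf₅]
  · intro k h1 h2
    simp only [hf₅, if_neg h2, hf₄, if_neg h1]
    exact e₃other k h1 h2

set_option maxHeartbeats 1000000 in
lemma dance {f : Fin N → V} (hf : Function.Injective f) {i j rc rd : Fin N} {w a c d b : V}
    (hB : ({a, c, d} : Finset V) ∈ blocks)
    (hfi : f i = a) (hfj : f j = b) (hfc : f rc = c) (hfd : f rd = d)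
    (hw : ∀ k, f k ≠ w)
    (hwa : G.Adj w a) (hab : G.Adj a b)
    (hac : G.Adj a c) (had : G.Adj a d) (hcd : G.Adj c d)
    (hbno : b ∉ ({a, c, d} : Finset V)) :
    ∃ g, Reach G blocks f g ∧ g i = b ∧ g j = a ∧ ∀ k, k ≠ i → k ≠ j → g k = f k := by
  have hbA : b ≠ a := by intro h; exact hbno (by simp [h])
  have hbC : b ≠ c := by intro h; exact hbno (by simp [h])
  have hbD : b ≠ d := by intro h; exact hbno (by simp [h])
  have hwA : w ≠ a := hwa.ne
  have hwB : w ≠ b := fun h => hw j (hfj.trans h.symm)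
  have hwC : w ≠ c := fun h => hw rc (hfc.trans h.symm)
  have hwD : w ≠ d := fun h => hw rd (hfd.trans h.symm)
  have hAC : a ≠ c := hac.ne
  have hAD : a ≠ d := had.ne
  have hCD : c ≠ d := hcd.ne
  have hidx : ∀ {k l : Fin N} {x y : V}, f k = x → f l = y → x ≠ y → k ≠ l := by
    intro k l x y hk hl hxy he
    exact hxy (hk.symm.trans ((congrArg f he).trans hl))
  have nij : i ≠ j := hidx hfi hfj (fun h => hbA h.symm)
  have nji : j ≠ i := nij.symm
  have nirc : i ≠ rc := hidx hfi hfc hAC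
  have nrci : rc ≠ i := nirc.symm
  have nird : i ≠ rd := hidx hfi hfd hAD
  have nrdi : rd ≠ i := nird.symm
  have njrc : j ≠ rc := hidx hfj hfc hbC
  have nrcj : rc ≠ j := njrc.symm
  have njrd : j ≠ rd := hidx hfj hfd hbD
  have nrdj : rd ≠ j := njrd.symm
  have nrcrd : rc ≠ rd := hidx hfc hfd hCD
  have nrdrc : rd ≠ rc := nrcrd.symm
  -- the ten configurations
  set F1 : Fin N → V := fun k => if k = i then c else if k = rc then d else if k = rd then a else f k with hF1
  set F2 : Fin N → V := fun k => if k = i then c else if k = rc then d else if k = rd then w else f k with hF2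
  set F3 : Fin N → V := fun k => if k = i then a else if k = rc then d else if k = rd then w else f k with hF3
  set F4 : Fin N → V := fun k => if k = i then a else if k = rc then c else if k = rd then w else f k with hF4
  set F5 : Fin N → V := fun k => if k = i then d else if k = rc then c else if k = rd then w else f k with hF5
  set F6 : Fin N → V := fun k => if k = i then d else if k = j then a else if k = rc then c else if k = rd then w else f k with hF6
  set F7 : Fin N → V := fun k => if k = i then a else if k = j then c else if k = rc then d else if k = rd then w else f k with hF7
  set F8 : Fin N → V := fun k => if k = i then b else if k = j then c else if k = rc then d else if k = rd then w else f k with hF8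
  set F9 : Fin N → V := fun k => if k = i then b else if k = j then c else if k = rc then d else if k = rd then a else f k with hF9
  set F10 : Fin N → V := fun k => if k = i then b else if k = j then a else if k = rc then c else if k = rd then d else f k with hF10
  have mv1 : Move G blocks f F1 := by
    refine cyc_move' i rc rd nirc nrcrd nird ?_ ?_ ?_ ?_ ?_
    · rw [hfi, hfc, hfd]; exact hB
    · simp [hF1, hfc]
    · simp [hF1, nrci, hfd]
    · simp [hF1, nrdi, nrdrc, hfi]
    · intro l h1 h2 h3; simp [hF1, h1, h2, h3]
  have mv2 : Move G blocks F1 F2 := by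
    refine vac_move' rd w ?_ ?_ ?_ ?_
    · have : F1 rd = a := by simp [hF1, nrdi, nrdrc]
      rw [this]; exact hwa.symm
    · intro k; simp only [hF1]
      split_ifs
      · exact hwC.symm
      · exact hwD.symm
      · exact hwA.symm
      · exact hw k
    · simp [hF2, nrdi, nrdrc]
    · intro k hk; simp only [hF1, hF2]; simp [hk]
  have mv3 : Move G blocks F2 F3 := by
    refine vac_move' i a ?_ ?_ ?_ ?_
    · have : F2 i = c := by simp [hF2]
      rw [this]; exact hac.symm
    · intro k; simp only [hF2]
      split_ifs with h1 h2 h3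
      · exact hAC.symm
      · exact hAD.symm
      · exact hwA
      · exact fun he => h1 (hf (he.trans hfi.symm))
    · simp [hF3]
    · intro k hk; simp only [hF2, hF3]; simp [hk]
  have mv4 : Move G blocks F3 F4 := by
    refine vac_move' rc c ?_ ?_ ?_ ?_
    · have : F3 rc = d := by simp [hF3, nrci]
      rw [this]; exact hcd.symm
    · intro k; simp only [hF3]
      split_ifs with h1 h2 h3
      · exact hAC
      · exact hCD.symm
      · exact hwC
      · exact fun he => h2 (hf (he.trans hfc.symm))
    · simp [hF4, nrci]
    · intro k hk; simp only [hF3, hF4]; simp [hk]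
  have mv5 : Move G blocks F4 F5 := by
    refine vac_move' i d ?_ ?_ ?_ ?_
    · have : F4 i = a := by simp [hF4]
      rw [this]; exact had
    · intro k; simp only [hF4]
      split_ifs with h1 h2 h3
      · exact hAD
      · exact hCD
      · exact hwD
      · exact fun he => h3 (hf (he.trans hfd.symm))
    · simp [hF5]
    · intro k hk; simp only [hF4, hF5]; simp [hk]
  have mv6 : Move G blocks F5 F6 := by
    refine vac_move' j a ?_ ?_ ?_ ?_
    · have : F5 j = b := by simp [hF5, nji, njrc, njrd, hfj]
      rw [this]; exact hab.symm
    · intro k; simp only [hF5]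
      split_ifs with h1 h2 h3
      · exact hAD.symm
      · exact hAC.symm
      · exact hwA
      · exact fun he => h1 (hf (he.trans hfi.symm))
    · simp [hF6, nji]
    · intro k hk; simp only [hF5, hF6]; simp [hk]
  have mv7 : Move G blocks F6 F7 := by
    refine cyc_move' j rc i njrc nrci nji ?_ ?_ ?_ ?_ ?_
    · have e1 : F6 j = a := by simp [hF6, nji]
      have e2 : F6 rc = c := by simp [hF6, nrci, nrcj]
      have e3 : F6 i = d := by simp [hF6]
      rw [e1, e2, e3]; exact hB
    · simp [hF7, hF6, nji, njrc, nrci, nrcj]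
    · simp [hF7, hF6, nrci, nrcj]
    · simp [hF7, hF6, nji]
    · intro l h1 h2 h3; simp [hF6, hF7, h1, h2, h3]
  have mv8 : Move G blocks F7 F8 := by
    refine vac_move' i b ?_ ?_ ?_ ?_
    · have : F7 i = a := by simp [hF7]
      rw [this]; exact hab
    · intro k; simp only [hF7]
      split_ifs with h1 h2 h3 h4
      · exact hbA.symm
      · exact hbC.symm
      · exact hbD.symm
      · exact hwB
      · exact fun he => h2 (hf (he.trans hfj.symm))
    · simp [hF8]
    · intro k hk; simp only [hF7, hF8]; simp [hk]
  have mv9 : Move G blocks F8 F9 := by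
    refine vac_move' rd a ?_ ?_ ?_ ?_
    · have : F8 rd = w := by simp [hF8, nrdi, nrdj, nrdrc]
      rw [this]; exact hwa
    · intro k; simp only [hF8]
      split_ifs with h1 h2 h3 h4
      · exact hbA
      · exact hAC.symm
      · exact hAD.symm
      · exact hwA
      · exact fun he => h1 (hf (he.trans hfi.symm))
    · simp [hF9, nrdi, nrdj, nrdrc]
    · intro k hk; simp only [hF8, hF9]; simp [hk]
  have mv10 : Move G blocks F9 F10 := by
    refine cyc_move' rd rc j nrdrc nrcj nrdj ?_ ?_ ?_ ?_ ?_
    · have e1 : F9 rd = a := by simp [hF9, nrdi, nrdj, nrdrc]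
      have e2 : F9 rc = d := by simp [hF9, nrci, nrcj]
      have e3 : F9 j = c := by simp [hF9, nji]
      rw [e1, e2, e3]
      have : ({a, d, c} : Finset V) = {a, c, d} := by ext z; simp; tauto
      rw [this]; exact hB
    · simp [hF10, hF9, nrdi, nrdj, nrdrc, nrci, nrcj]
    · simp [hF10, hF9, nrci, nrcj, nji]
    · simp [hF10, hF9, nji, nrdi, nrdj, nrdrc]
    · intro l h1 h2 h3; simp [hF9, hF10, h1, h2, h3]
  refine ⟨F10, ?_, ?_, ?_, ?_⟩
  · exact Relation.ReflTransGen.head mv1 (Relation.ReflTransGen.head mv2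
      (Relation.ReflTransGen.head mv3 (Relation.ReflTransGen.head mv4
      (Relation.ReflTransGen.head mv5 (Relation.ReflTransGen.head mv6
      (Relation.ReflTransGen.head mv7 (Relation.ReflTransGen.head mv8
      (Relation.ReflTransGen.head mv9 (Relation.ReflTransGen.head mv10
      Relation.ReflTransGen.refl)))))))))
  · simp [hF10]
  · simp [hF10, nji]
  · intro k h1 h2
    by_cases h3 : k = rc
    · subst h3; simp [hF10, nrci, nrcj, hfc]
    · by_cases h4 : k = rd
      · subst h4; simp [hF10, nrdi, nrdj, nrdrc, hfd]
      · simp [hF10, h1, h2, h3, h4]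

lemma finish_trick {f : Fin N → V} (hf : Function.Injective f) {i j : Fin N} (hij : i ≠ j)
    {u y : V} (W : G.Walk u y) (hWnd : W.support.Nodup) (hu : ∀ k, f k ≠ u)
    (hiW : f i ∉ W.support) (hjW : f j ∉ W.support)
    {g₂ : Fin N → V} (r₂ : Reach G blocks (fun k => shift W (f k)) g₂)
    (e1 : g₂ i = f j) (e2 : g₂ j = f i) (e3 : ∀ k, k ≠ i → k ≠ j → g₂ k = shift W (f k)) :
    ∃ g, Reach G blocks f g ∧ g i = f j ∧ g j = f i ∧ ∀ k, k ≠ i → k ≠ j → g k = f k := by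
  have hji : j ≠ i := hij.symm
  set ft : Fin N → V := fun k => if k = i then f j else if k = j then f i else f k with hft
  have hftinj : Function.Injective ft := swap_fun_inj hf i j
  have hftu : ∀ k, ft k ≠ u := by
    intro k; simp only [hft]
    split_ifs
    · exact hu j
    · exact hu i
    · exact hu k
  have r₁ : Reach G blocks f (fun k => shift W (f k)) := transport_reach W f hWnd hf hu
  have r₃ : Reach G blocks ft (fun k => shift W (ft k)) := transport_reach W ft hWnd hftinj hftu
  have heq : (fun k => shift W (ft k)) = g₂ := by
    funext k
    by_cases h1 : k = i
    · subst h1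
      simp [hft, shift_of_not_mem_support W hjW, e1]
    · by_cases h2 : k = j
      · subst h2
        simp [hft, hji, shift_of_not_mem_support W hiW, e2]
      · simp [hft, h1, h2, e3 k h1 h2]
  rw [heq] at r₃
  refine ⟨ft, r₁.trans (r₂.trans (reach_symm r₃ hftinj)), ?_, ?_, ?_⟩
  · simp [hft]
  · simp [hft, hji]
  · intro k h1 h2; simp [hft, h1, h2]

end Infra

/-- On a 3-loop graph with at least 2 blocks and `N < |V|` robots, any two robots on
adjacent vertices can be swapped while restoring the positions of all other robots. -/
theorem three_loop_graph_adjacent_swap {V : Type*} [Fintype V] [DecidableEq V]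
    (G : SimpleGraph V) (hconn : G.Connected)
    (blocks : Finset (Finset V))
    (hpart : ∀ v : V, ∃! B, B ∈ blocks ∧ v ∈ B)
    (hcard : ∀ B ∈ blocks, B.card = 3)
    (hadj : ∀ B ∈ blocks, ∀ a ∈ B, ∀ b ∈ B, a ≠ b → G.Adj a b)
    (hblocks : 2 ≤ blocks.card)
    {N : ℕ} (hN : N < Fintype.card V)
    (f : Fin N → V) (hf : Function.Injective f)
    (i j : Fin N) (hij : i ≠ j) (hfij : G.Adj (f i) (f j)) :
    ∃ g : Fin N → V,
      Relation.ReflTransGen (Move G blocks) f g ∧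
      g i = f j ∧ g j = f i ∧ ∀ k, k ≠ i → k ≠ j → g k = f k := by
  obtain ⟨B₁, ⟨hB₁, hiB₁⟩, -⟩ := hpart (f i)
  obtain ⟨B₂, ⟨hB₂, hjB₂⟩, -⟩ := hpart (f j)
  by_cases hBeq : B₁ = B₂
  · exact block_swap hconn hcard hadj hN hf hij hB₁ hiB₁ (hBeq ▸ hjB₂)
  · have hdisj : ∀ z, z ∈ B₁ → z ∈ B₂ → False := fun z h1 h2 =>
      hBeq ((hpart z).unique ⟨hB₁, h1⟩ ⟨hB₂, h2⟩)
    have easyCase : ∀ (F : Fin N → V), Function.Injective F → F i = f i → F j = f j →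
        ∀ v, v ∈ B₁ ∪ B₂ → v ≠ f i → v ≠ f j → (∀ k, F k ≠ v) →
        ∃ g, Reach G blocks F g ∧ g i = f j ∧ g j = f i ∧ ∀ k, k ≠ i → k ≠ j → g k = F k := by
      intro F hFinj hFi hFj v hv hv1 hv2 hvac
      rw [Finset.mem_union] at hv
      rcases hv with hvB | hvB
      · obtain ⟨g, r, e1, e2, e3⟩ := easy₁ hconn hcard hadj hN hFinj hij hB₁ hB₂
          (by rw [hFi]; exact hiB₁) (by rw [hFj]; exact hjB₂)
          (by rw [hFi, hFj]; exact hfij) hvB (by rw [hFi]; exact hv1) hvac hdisj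
        exact ⟨g, r, by rw [e1]; exact hFj, by rw [e2]; exact hFi, e3⟩
      · obtain ⟨g, r, e1, e2, e3⟩ := easy₁ hconn hcard hadj hN hFinj hij.symm hB₂ hB₁
          (by rw [hFj]; exact hjB₂) (by rw [hFi]; exact hiB₁)
          (by rw [hFi, hFj]; exact hfij.symm) hvB (by rw [hFj]; exact hv2) hvac
          (fun z h1 h2 => hdisj z h2 h1)
        exact ⟨g, r, by rw [e2]; exact hFj, by rw [e1]; exact hFi,
          fun k hk1 hk2 => e3 k hk2 hk1⟩
    by_cases hevac : ∃ v, v ∈ B₁ ∪ B₂ ∧ v ≠ f i ∧ v ≠ f j ∧ ∀ k, f k ≠ v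
    · obtain ⟨v, hv, h1, h2, h3⟩ := hevac
      exact easyCase f hf rfl rfl v hv h1 h2 h3
    · push_neg at hevac
      obtain ⟨u, hu⟩ := exists_vacant hN f
      have huS : u ∉ B₁ ∪ B₂ := by
        intro hmem
        by_cases e1 : u = f i
        · exact hu i e1.symm
        by_cases e2 : u = f j
        · exact hu j e2.symm
        obtain ⟨k, hk⟩ := hevac u hmem e1 e2
        exact hu k hk
      obtain ⟨x, W, hxS, hWnd, hWS, -⟩ :=
        trim_walk (B₁ ∪ B₂) ((hconn.preconnected u (f i)).some.toPath : G.Path u (f i)).1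
          ((hconn.preconnected u (f i)).some.toPath).2.support_nodup huS
          (Finset.mem_union_left _ hiB₁)
      by_cases hx1 : x = f i
      · -- hard case: hole path reaches f i first; dance on B₁ side
        subst hx1
        obtain ⟨w', W₁, hadjw, hsupp⟩ :=
          last_split W (SimpleGraph.Walk.not_nil_of_ne (fun he => hu i he.symm))
        have hWnd' : (W₁.support ++ [f i]).Nodup := hsupp ▸ hWnd
        rw [List.nodup_append] at hWnd'
        obtain ⟨hW₁nd, -, hdisjW⟩ := hWnd'
        have hW₁S : ∀ z ∈ W₁.support, z ∉ B₁ ∪ B₂ := by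
          intro z hz hzS
          have hzW : z ∈ W.support := by rw [hsupp]; exact List.mem_append_left _ hz
          exact hdisjW z hz _ (by simp) (hWS z hzW hzS)
        have hcard2 : (B₁.erase (f i)).card = 2 := by
          rw [Finset.card_erase_of_mem hiB₁, hcard B₁ hB₁]
        obtain ⟨c, d, hcdne, hcd_eq⟩ := Finset.card_eq_two.mp hcard2
        have hcE : c ∈ B₁.erase (f i) := by rw [hcd_eq]; simp
        have hdE : d ∈ B₁.erase (f i) := by rw [hcd_eq]; simp
        have hcB : c ∈ B₁ := Finset.mem_of_mem_erase hcE
        have hdB : d ∈ B₁ := Finset.mem_of_mem_erase hdE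
        have hcne : c ≠ f i := Finset.ne_of_mem_erase hcE
        have hdne : d ≠ f i := Finset.ne_of_mem_erase hdE
        have hcj : c ≠ f j := fun he => hdisj c hcB (by rw [he]; exact hjB₂)
        have hdj : d ≠ f j := fun he => hdisj d hdB (by rw [he]; exact hjB₂)
        obtain ⟨rc, hrc⟩ := hevac c (Finset.mem_union_left _ hcB) hcne hcj
        obtain ⟨rd, hrd⟩ := hevac d (Finset.mem_union_left _ hdB) hdne hdj
        have hBtriple : B₁ = {f i, c, d} :=
          eq_triple (hcard B₁ hB₁) hiB₁ hcB hdB hcne.symm hdne.symm hcdne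
        have adjic : G.Adj (f i) c := hadj B₁ hB₁ _ hiB₁ _ hcB hcne.symm
        have adjid : G.Adj (f i) d := hadj B₁ hB₁ _ hiB₁ _ hdB hdne.symm
        have adjcd : G.Adj c d := hadj B₁ hB₁ _ hcB _ hdB hcdne
        have hiW₁ : f i ∉ W₁.support := fun hz => hdisjW _ hz (f i) (by simp) rfl
        have hjW₁ : f j ∉ W₁.support := fun hz => hW₁S _ hz (Finset.mem_union_right _ hjB₂)
        have hcW₁ : c ∉ W₁.support := fun hz => hW₁S _ hz (Finset.mem_union_left _ hcB)
        have hdW₁ : d ∉ W₁.support := fun hz => hW₁S _ hz (Finset.mem_union_left _ hdB)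
        have r₁ : Reach G blocks f (fun k => shift W₁ (f k)) :=
          transport_reach W₁ f hW₁nd hf hu
        have injG₁ : Function.Injective (fun k => shift W₁ (f k)) := reach_inj r₁ hf
        obtain ⟨g₂, r₂, e1, e2, e3⟩ := dance (G := G) (blocks := blocks) injG₁
          (by rw [← hBtriple]; exact hB₁)
          (shift_of_not_mem_support W₁ hiW₁)
          (shift_of_not_mem_support W₁ hjW₁)
          (by rw [hrc]; exact shift_of_not_mem_support W₁ hcW₁)
          (by rw [hrd]; exact shift_of_not_mem_support W₁ hdW₁)
          (fun k => shift_ne_end W₁ hW₁nd _ (hu k))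
          hadjw hfij adjic adjid adjcd
          (by simp only [Finset.mem_insert, Finset.mem_singleton]
              push_neg
              exact ⟨hfij.ne', fun he => hcj he.symm, fun he => hdj he.symm⟩)
        exact finish_trick hf hij W₁ hW₁nd hu hiW₁ hjW₁ r₂ e1 e2 e3
      by_cases hx2 : x = f j
      · -- hard case: trimmed path reaches f j first; dance on B₂ side
        subst hx2
        obtain ⟨w', W₁, hadjw, hsupp⟩ :=
          last_split W (SimpleGraph.Walk.not_nil_of_ne (fun he => hu j he.symm))
        have hWnd' : (W₁.support ++ [f j]).Nodup := hsupp ▸ hWnd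
        rw [List.nodup_append] at hWnd'
        obtain ⟨hW₁nd, -, hdisjW⟩ := hWnd'
        have hW₁S : ∀ z ∈ W₁.support, z ∉ B₁ ∪ B₂ := by
          intro z hz hzS
          have hzW : z ∈ W.support := by rw [hsupp]; exact List.mem_append_left _ hz
          exact hdisjW z hz _ (by simp) (hWS z hzW hzS)
        have hcard2 : (B₂.erase (f j)).card = 2 := by
          rw [Finset.card_erase_of_mem hjB₂, hcard B₂ hB₂]
        obtain ⟨c, d, hcdne, hcd_eq⟩ := Finset.card_eq_two.mp hcard2
        have hcE : c ∈ B₂.erase (f j) := by rw [hcd_eq]; simp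
        have hdE : d ∈ B₂.erase (f j) := by rw [hcd_eq]; simp
        have hcB : c ∈ B₂ := Finset.mem_of_mem_erase hcE
        have hdB : d ∈ B₂ := Finset.mem_of_mem_erase hdE
        have hcne : c ≠ f j := Finset.ne_of_mem_erase hcE
        have hdne : d ≠ f j := Finset.ne_of_mem_erase hdE
        have hci : c ≠ f i := fun he => hdisj c (by rw [he]; exact hiB₁) hcB
        have hdi : d ≠ f i := fun he => hdisj d (by rw [he]; exact hiB₁) hdB
        obtain ⟨rc, hrc⟩ := hevac c (Finset.mem_union_right _ hcB) hci hcne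
        obtain ⟨rd, hrd⟩ := hevac d (Finset.mem_union_right _ hdB) hdi hdne
        have hBtriple : B₂ = {f j, c, d} :=
          eq_triple (hcard B₂ hB₂) hjB₂ hcB hdB hcne.symm hdne.symm hcdne
        have adjjc : G.Adj (f j) c := hadj B₂ hB₂ _ hjB₂ _ hcB hcne.symm
        have adjjd : G.Adj (f j) d := hadj B₂ hB₂ _ hjB₂ _ hdB hdne.symm
        have adjcd : G.Adj c d := hadj B₂ hB₂ _ hcB _ hdB hcdne
        have hjW₁ : f j ∉ W₁.support := fun hz => hdisjW _ hz (f j) (by simp) rfl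
        have hiW₁ : f i ∉ W₁.support := fun hz => hW₁S _ hz (Finset.mem_union_left _ hiB₁)
        have hcW₁ : c ∉ W₁.support := fun hz => hW₁S _ hz (Finset.mem_union_right _ hcB)
        have hdW₁ : d ∉ W₁.support := fun hz => hW₁S _ hz (Finset.mem_union_right _ hdB)
        have r₁ : Reach G blocks f (fun k => shift W₁ (f k)) :=
          transport_reach W₁ f hW₁nd hf hu
        have injG₁ : Function.Injective (fun k => shift W₁ (f k)) := reach_inj r₁ hf
        obtain ⟨g₂, r₂, e1, e2, e3⟩ := dance (G := G) (blocks := blocks) injG₁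
          (by rw [← hBtriple]; exact hB₂)
          (shift_of_not_mem_support W₁ hjW₁)
          (shift_of_not_mem_support W₁ hiW₁)
          (by rw [hrc]; exact shift_of_not_mem_support W₁ hcW₁)
          (by rw [hrd]; exact shift_of_not_mem_support W₁ hdW₁)
          (fun k => shift_ne_end W₁ hW₁nd _ (hu k))
          hadjw hfij.symm adjjc adjjd adjcd
          (by simp only [Finset.mem_insert, Finset.mem_singleton]
              push_neg
              exact ⟨hfij.ne, fun he => hci he.symm, fun he => hdi he.symm⟩)
        exact finish_trick hf hij W₁ hW₁nd hu hiW₁ hjW₁ r₂ e2 e1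
          (fun k h1 h2 => e3 k h2 h1)
      · -- trimmed path reaches a vertex of (B₁ ∪ B₂) \ {f i, f j} first
        have hiW : f i ∉ W.support :=
          fun hm => hx1 ((hWS _ hm (Finset.mem_union_left _ hiB₁)).symm)
        have hjW : f j ∉ W.support :=
          fun hm => hx2 ((hWS _ hm (Finset.mem_union_right _ hjB₂)).symm)
        have r₁ : Reach G blocks f (fun k => shift W (f k)) :=
          transport_reach W f hWnd hf hu
        have hFinj : Function.Injective (fun k => shift W (f k)) := reach_inj r₁ hf
        obtain ⟨g₂, r₂, e1, e2, e3⟩ := easyCase (fun k => shift W (f k)) hFinj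
          (shift_of_not_mem_support W hiW) (shift_of_not_mem_support W hjW)
          x hxS hx1 hx2 (fun k => shift_ne_end W hWnd (f k) (hu k))
        exact finish_trick hf hij W hWnd hu hiW hjW r₂ e1 e2 e3
end

section
/- Let x̄1, x̄2, x̄3 ∈ ℝ² be non-collinear and r > 0, and define the corner point x2 = x̄2 + r·((x̄3 − x̄2)·‖x̄1 − x̄2‖ + (x̄1 − x̄2)·‖x̄3 − x̄2‖) / |(x̄3 − x̄2) × (x̄1 − x̄2)|, where u × v = u₁v₂ − u₂v₁ for u, v ∈ ℝ². Then the distance from x2 to the line through x̄2 and x̄1 equals r, the distance from x2 to the line through x̄2 and x̄3 equals r, and x2 lies strictly on the same side of the line through x̄2, x̄1 as x̄3 and strictly on the same side of the line through x̄2, x̄3 as x̄1 (i.e. x2 lies in the open angular sector of the triangle at vertex x̄2). -/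
open Metric
open RealInnerProductSpace

/-- The plane `ℝ²` with the Euclidean metric. -/
abbrev E2 := EuclideanSpace ℝ (Fin 2)

/-- Scalar 2D cross product `u × v = u₁v₂ − u₂v₁`. -/
noncomputable def cross2 (u v : E2) : ℝ := u 0 * v 1 - u 1 * v 0

/-- The corner point of the triangle `x̄1 x̄2 x̄3` at the (middle) vertex `x̄2`:
`x2 = x̄2 + r ((x̄3 − x̄2)‖x̄1 − x̄2‖ + (x̄1 − x̄2)‖x̄3 − x̄2‖) / |(x̄3 − x̄2) × (x̄1 − x̄2)|`. -/
noncomputable def corner (r : ℝ) (a b c : E2) : E2 :=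
  b + (r / |cross2 (c - b) (a - b)|) • (‖a - b‖ • (c - b) + ‖c - b‖ • (a - b))

lemma inner_expand (u v : E2) : ⟪u, v⟫ = u 0 * v 0 + u 1 * v 1 := by
  simp [PiLp.inner_apply, Fin.sum_univ_two, RCLike.inner_apply, conj_trivial]; ring

lemma lagrange (u w : E2) : ⟪u, w⟫ ^ 2 + cross2 u w ^ 2 = ‖u‖ ^ 2 * ‖w‖ ^ 2 := by
  rw [← real_inner_self_eq_norm_sq, ← real_inner_self_eq_norm_sq]
  simp only [inner_expand, cross2]
  ring

lemma cross2_swap (u v : E2) : cross2 u v = -cross2 v u := by simp [cross2]; ring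

lemma corner_comm (r : ℝ) (a b c : E2) : corner r a b c = corner r c b a := by
  unfold corner
  rw [show cross2 (a - b) (c - b) = -(cross2 (c - b) (a - b)) from cross2_swap _ _, abs_neg,
    add_comm (‖c - b‖ • (a - b))]

lemma infDist_line (b a p q : E2) (hq : q ∈ affineSpan ℝ ({b, a} : Set E2))
    (h : ∀ y ∈ affineSpan ℝ ({b, a} : Set E2), ⟪p - q, q - y⟫ = 0) :
    infDist p (affineSpan ℝ ({b, a} : Set E2) : Set E2) = ‖p - q‖ := by
  refine le_antisymm (by simpa [dist_eq_norm] using infDist_le_dist_of_mem hq) ?_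
  by_contra hlt
  push_neg at hlt
  obtain ⟨y, hy, hd⟩ := (infDist_lt_iff ⟨q, hq⟩).mp hlt
  have hpy : ‖p - y‖ ^ 2 = ‖p - q‖ ^ 2 + ‖q - y‖ ^ 2 := by
    have h2 := norm_add_sq_real (p - q) (q - y)
    rw [h y hy, sub_add_sub_cancel] at h2
    linarith
  have hle : ‖p - q‖ ≤ ‖p - y‖ := by
    nlinarith [norm_nonneg (q - y), norm_nonneg (p - y), norm_nonneg (p - q)]
  rw [dist_eq_norm] at hd
  linarith

lemma half' (r : ℝ) (hr : 0 < r) (b u w : E2) (hc : cross2 w u ≠ 0) :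
    infDist (b + (r / |cross2 w u|) • (‖u‖ • w + ‖w‖ • u))
      (affineSpan ℝ ({b, b + u} : Set E2) : Set E2) = r ∧
    (affineSpan ℝ ({b, b + u} : Set E2)).SSameSide
      (b + (r / |cross2 w u|) • (‖u‖ • w + ‖w‖ • u)) (b + w) := by
  set s : ℝ := r / |cross2 w u| with hs_def
  have hcabs : |cross2 w u| ≠ 0 := abs_ne_zero.2 hc
  have hs : 0 < s := div_pos hr (abs_pos.2 hc)
  have hu0 : u ≠ 0 := by
    intro h0
    exact hc (by simp [cross2, h0])
  have hnu : 0 < ‖u‖ := norm_pos_iff.2 hu0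
  have hnu' : ‖u‖ ≠ 0 := ne_of_gt hnu
  set P : E2 := b + s • (‖u‖ • w + ‖w‖ • u) with hP_def
  set d : ℝ := ⟪u, w⟫ with hd_def
  set t0 : ℝ := s * ‖w‖ + s * d / ‖u‖ with ht0_def
  set z : E2 := w - (d / ‖u‖ ^ 2) • u with hz_def
  set q : E2 := t0 • u + b with hq_def
  set q2 : E2 := (d / ‖u‖ ^ 2) • u + b with hq2_def
  -- memberships
  have hmem : ∀ t : ℝ, t • u + b ∈ affineSpan ℝ ({b, b + u} : Set E2) := by
    intro t
    have : t • u +ᵥ b ∈ line[ℝ, b, b + u] :=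
      (vadd_left_mem_affineSpan_pair).2 ⟨t, by simp [vsub_eq_sub]⟩
    simpa using this
  have hq : q ∈ affineSpan ℝ ({b, b + u} : Set E2) := hmem t0
  have hq2 : q2 ∈ affineSpan ℝ ({b, b + u} : Set E2) := hmem _
  -- element characterization
  have hmem_iff : ∀ y ∈ affineSpan ℝ ({b, b + u} : Set E2), ∃ t : ℝ, y = t • u + b := by
    intro y hy
    have h1 := AffineSubspace.vsub_mem_direction hy (left_mem_affineSpan_pair ℝ b (b + u))
    rw [direction_affineSpan, vectorSpan_pair] at h1
    rw [Submodule.mem_span_singleton] at h1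
    obtain ⟨t, ht⟩ := h1
    refine ⟨-t, ?_⟩
    have h2 : y - b = t • (b - (b + u)) := by simpa [vsub_eq_sub] using ht.symm
    have h3 : y - b = (-t) • u := by rw [h2]; module
    rw [← h3]; abel
  -- key vector identity
  have f1 : P - q = (s * ‖u‖) • z := by
    rw [hP_def, hq_def, hz_def, ht0_def]
    match_scalars <;> field_simp <;> ring
  have f2 : ⟪u, z⟫ = 0 := by
    rw [hz_def]
    rw [inner_sub_right, real_inner_smul_right, real_inner_self_eq_norm_sq, ← hd_def]
    field_simp; ring
  have hperp : ⟪P - q, u⟫ = 0 := by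
    rw [f1, real_inner_smul_left, real_inner_comm, f2, mul_zero]
  -- norm computation
  have hz2 : ‖z‖ ^ 2 * ‖u‖ ^ 2 = cross2 u w ^ 2 := by
    have h3 : ‖z‖ ^ 2 = ⟪z, z⟫ := (real_inner_self_eq_norm_sq z).symm
    have h2 := lagrange u w
    rw [← hd_def] at h2
    have hcomm : ⟪w, u⟫ = d := by rw [hd_def]; exact real_inner_comm u w
    rw [h3, hz_def, real_inner_sub_sub_self, real_inner_smul_right, real_inner_smul_left,
      real_inner_smul_right, hcomm, real_inner_self_eq_norm_sq, real_inner_self_eq_norm_sq]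
    field_simp
    first
    | linear_combination h2
    | linear_combination -h2
    | linear_combination ‖u‖ ^ 2 * h2
    | linear_combination (‖u‖ ^ 2) * h2 - h2
  have hPq_norm : ‖P - q‖ = r := by
    have hcc : cross2 u w ^ 2 = cross2 w u ^ 2 := by simp [cross2]; ring
    have hsq : ‖P - q‖ ^ 2 = r ^ 2 := by
      have h4 : ‖P - q‖ ^ 2 = s ^ 2 * (‖z‖ ^ 2 * ‖u‖ ^ 2) := by
        rw [f1, norm_smul, Real.norm_eq_abs, mul_pow, sq_abs, mul_pow]
        ring
      rw [h4, hz2, hcc, hs_def, div_pow, ← sq_abs (cross2 w u)]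
      field_simp
    have hfac : (‖P - q‖ - r) * (‖P - q‖ + r) = 0 := by linear_combination hsq
    rcases mul_eq_zero.1 hfac with h | h
    · linarith
    · nlinarith [norm_nonneg (P - q)]
  constructor
  · rw [infDist_line b (b + u) P q hq ?_, hPq_norm]
    intro y hy
    obtain ⟨t, rfl⟩ := hmem_iff y hy
    have h5 : q - (t • u + b) = (t0 - t) • u := by rw [hq_def]; module
    rw [h5, real_inner_smul_right, hperp, mul_zero]
  · refine ⟨⟨q, hq, q2, hq2, ?_⟩, ?_, ?_⟩
    · have hbw : b + w -ᵥ q2 = z := by rw [vsub_eq_sub, hq2_def, hz_def]; module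
      have hPz : P -ᵥ q = (s * ‖u‖) • z := by rw [vsub_eq_sub]; exact f1
      rw [hbw, hPz]
      exact SameRay.sameRay_nonneg_smul_left z (by positivity)
    · intro hmemP
      obtain ⟨t, ht⟩ := hmem_iff P hmemP
      have hPb : P - b = s • (‖u‖ • w + ‖w‖ • u) := by rw [hP_def]; abel
      have htu : t • u = s • (‖u‖ • w + ‖w‖ • u) := by rw [← hPb, ht]; abel
      have e1 : cross2 (t • u) u = 0 := by simp [cross2]; ring
      have e2 : cross2 (s • (‖u‖ • w + ‖w‖ • u)) u = s * ‖u‖ * cross2 w u := by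
        simp [cross2]; ring
      rw [htu, e2] at e1
      rcases mul_eq_zero.1 e1 with h | h
      · rcases mul_eq_zero.1 h with h' | h'
        · linarith
        · exact hnu' h'
      · exact hc h
    · intro hmemw
      obtain ⟨t, ht⟩ := hmem_iff (b + w) hmemw
      have htu : t • u = w := by
        have h6 : b + w - b = t • u + b - b := by rw [← ht]
        simpa using h6.symm
      have e1 : cross2 (t • u) u = 0 := by simp [cross2]; ring
      rw [htu] at e1
      exact hc e1

lemma cross_ne_of_not_collinear (x1 x2 x3 : E2)
    (h : ¬ Collinear ℝ ({x1, x2, x3} : Set E2)) : cross2 (x3 - x2) (x1 - x2) ≠ 0 := by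
  intro hc
  apply h
  rw [collinear_iff_of_mem (show x2 ∈ ({x1, x2, x3} : Set E2) by simp)]
  by_cases hu0 : x1 - x2 = 0
  · have hx12 : x1 = x2 := sub_eq_zero.mp hu0
    refine ⟨x3 - x2, ?_⟩
    intro p hp
    rcases hp with rfl | rfl | rfl
    · exact ⟨0, by simp [hx12]⟩
    · exact ⟨0, by simp⟩
    · exact ⟨1, by simp⟩
  · refine ⟨x1 - x2, ?_⟩
    have hcoord : (x3 0 - x2 0) * (x1 1 - x2 1) - (x3 1 - x2 1) * (x1 0 - x2 0) = 0 := hc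
    have hkey : ∃ t : ℝ, x3 - x2 = t • (x1 - x2) := by
      by_cases h0 : x1 0 - x2 0 ≠ 0
      · refine ⟨(x3 0 - x2 0) / (x1 0 - x2 0), ?_⟩
        ext i
        fin_cases i
        · show x3 0 - x2 0 = ((x3 0 - x2 0) / (x1 0 - x2 0)) • (x1 0 - x2 0)
          rw [smul_eq_mul]
          field_simp
        · show x3 1 - x2 1 = ((x3 0 - x2 0) / (x1 0 - x2 0)) • (x1 1 - x2 1)
          rw [smul_eq_mul, div_mul_eq_mul_div, eq_div_iff h0]
          linear_combination -hcoord
      · push_neg at h0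
        have h1 : x1 1 - x2 1 ≠ 0 := by
          intro h1
          apply hu0
          ext i
          fin_cases i
          · show x1 0 - x2 0 = 0; exact h0
          · show x1 1 - x2 1 = 0; exact h1
        refine ⟨(x3 1 - x2 1) / (x1 1 - x2 1), ?_⟩
        ext i
        fin_cases i
        · show x3 0 - x2 0 = ((x3 1 - x2 1) / (x1 1 - x2 1)) • (x1 0 - x2 0)
          rw [smul_eq_mul, h0, mul_zero]
          have h2 : (x3 0 - x2 0) * (x1 1 - x2 1) = 0 := by rw [h0] at hcoord; linarith
          rcases mul_eq_zero.1 h2 with h | h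
          · exact h
          · exact absurd h h1
        · show x3 1 - x2 1 = ((x3 1 - x2 1) / (x1 1 - x2 1)) • (x1 1 - x2 1)
          rw [smul_eq_mul]
          field_simp
    obtain ⟨t, htw⟩ := hkey
    intro p hp
    rcases hp with rfl | rfl | rfl
    · exact ⟨1, by simp⟩
    · exact ⟨0, by simp⟩
    · exact ⟨t, by rw [← htw]; simp⟩

/-- For a non-degenerate triangle `x̄1 x̄2 x̄3` and `r > 0`, the corner point at `x̄2` is at
distance exactly `r` from each of the two incident edge lines, and lies strictly inside the
open angular sector of the triangle at `x̄2`. -/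
theorem corner_point_properties (r : ℝ) (hr : 0 < r) (x1 x2 x3 : E2)
    (h : ¬ Collinear ℝ ({x1, x2, x3} : Set E2)) :
    infDist (corner r x1 x2 x3) (affineSpan ℝ ({x2, x1} : Set E2) : Set E2) = r ∧
    infDist (corner r x1 x2 x3) (affineSpan ℝ ({x2, x3} : Set E2) : Set E2) = r ∧
    (affineSpan ℝ ({x2, x1} : Set E2)).SSameSide (corner r x1 x2 x3) x3 ∧
    (affineSpan ℝ ({x2, x3} : Set E2)).SSameSide (corner r x1 x2 x3) x1 := by
  have hc1 : cross2 (x3 - x2) (x1 - x2) ≠ 0 := cross_ne_of_not_collinear x1 x2 x3 h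
  have hc2 : cross2 (x1 - x2) (x3 - x2) ≠ 0 := by
    rw [cross2_swap]; exact neg_ne_zero.2 hc1
  have e12 : x2 + (x1 - x2) = x1 := by abel
  have e32 : x2 + (x3 - x2) = x3 := by abel
  have hcor1 : corner r x1 x2 x3
      = x2 + (r / |cross2 (x3 - x2) (x1 - x2)|) • (‖x1 - x2‖ • (x3 - x2) + ‖x3 - x2‖ • (x1 - x2)) := rfl
  have hcor2 : corner r x1 x2 x3
      = x2 + (r / |cross2 (x1 - x2) (x3 - x2)|) • (‖x3 - x2‖ • (x1 - x2) + ‖x1 - x2‖ • (x3 - x2)) := by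
    rw [corner_comm r x1 x2 x3]; rfl
  obtain ⟨hA1, hB1⟩ := half' r hr x2 (x1 - x2) (x3 - x2) hc1
  obtain ⟨hA2, hB2⟩ := half' r hr x2 (x3 - x2) (x1 - x2) hc2
  simp only [e12, e32] at hA1 hB1 hA2 hB2
  rw [← hcor1] at hA1 hB1
  rw [← hcor2] at hA2 hB2
  exact ⟨hA1, hA2, hB1, hB2⟩
end

section
/- Let p(t) = a·t² + b·t + c be a real polynomial of degree at most 2. Then p(t) ≥ 0 for all t ∈ [0, 1] if and only if there exist real numbers α1, α2, α3, α4 such that p(t) = α1·(2t − 1)² + 2·α2·(2t − 1) + α3 + α4·(4t − 4t²) for all t, with α1 ≥ 0, α3 ≥ 0, α1·α3 ≥ α2², and α4 ≥ 0. -/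
/-- Degree-2 case of the Fekete / Markov–Lukács theorem: a real polynomial
`p(t) = a t² + b t + c` is nonnegative on `[0, 1]` iff it can be written as
`α1 (2t−1)² + 2 α2 (2t−1) + α3 + α4 (4t − 4t²)` with `α1 ≥ 0`, `α3 ≥ 0`,
`α1 α3 ≥ α2²` and `α4 ≥ 0`. -/
theorem quadratic_nonneg_on_unit_interval_iff (a b c : ℝ) :
    (∀ t ∈ Set.Icc (0 : ℝ) 1, 0 ≤ a * t ^ 2 + b * t + c) ↔
    ∃ α1 α2 α3 α4 : ℝ,
      (∀ t : ℝ, a * t ^ 2 + b * t + c =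
        α1 * (2 * t - 1) ^ 2 + 2 * α2 * (2 * t - 1) + α3 + α4 * (4 * t - 4 * t ^ 2)) ∧
      0 ≤ α1 ∧ 0 ≤ α3 ∧ α2 ^ 2 ≤ α1 * α3 ∧ 0 ≤ α4 := by
  constructor
  · intro h
    have h0 : (0:ℝ) ≤ c := by have := h 0 (by norm_num); linarith [this]
    have h1 : (0:ℝ) ≤ a + b + c := by have := h 1 (by norm_num); nlinarith [this]
    have hm : (0:ℝ) ≤ a/4 + b/2 + c := by have := h (1/2) (by norm_num); nlinarith [this]
    set D := Real.sqrt (c * (a + b + c)) with hDdef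
    have hD0 : 0 ≤ D := Real.sqrt_nonneg _
    have hD2 : D ^ 2 = c * (a + b + c) := Real.sq_sqrt (mul_nonneg h0 h1)
    have hS : 0 ≤ a/2 + b/2 + c := by nlinarith
    have hDS : D ≤ a/2 + b/2 + c := by nlinarith [sq_nonneg (a + b)]
    have hα4 : 0 ≤ b/2 + c + D := by
      by_cases hbc : 0 ≤ b/2 + c
      · linarith
      · push_neg at hbc
        have hb : b < 0 := by linarith
        have ha : 0 < a := by linarith
        have ht0 : 0 ≤ a * (-b/(2*a)) ^ 2 + b * (-b/(2*a)) + c := by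
          apply h
          constructor
          · apply div_nonneg <;> linarith
          · rw [div_le_one (by positivity)]; linarith
        have hb2 : b ^ 2 ≤ 4 * a * c := by
          have e : a * (-b/(2*a)) ^ 2 + b * (-b/(2*a)) + c = c - b ^ 2 / (4*a) := by
            field_simp; ring
          rw [e] at ht0
          have h' : b ^ 2 / (4*a) ≤ c := by linarith
          rw [div_le_iff₀ (by positivity)] at h'
          linarith
        nlinarith [hD2, hD0, h0, hb2]
    refine ⟨(a/2 + b/2 + c + D)/2, (a + b)/4, (a/2 + b/2 + c - D)/2,
      (a/2 + b/2 + c + D)/2 - a/4, ?_, by linarith, by linarith, by nlinarith [hD2], by linarith⟩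
    intro t; ring
  · rintro ⟨α1, α2, α3, α4, hrep, hh1, hh3, hh23, hh4⟩
    intro t ht
    obtain ⟨ht0, ht1⟩ := ht
    rw [hrep t]
    have hq : 0 ≤ α4 * (4 * t - 4 * t ^ 2) := by
      have : 0 ≤ 4 * t - 4 * t ^ 2 := by nlinarith
      exact mul_nonneg hh4 this
    have key : 0 ≤ α1 * (2 * t - 1) ^ 2 + 2 * α2 * (2 * t - 1) + α3 := by
      rcases eq_or_lt_of_le hh1 with h|h
      · have hα2 : α2 = 0 := by nlinarith [sq_nonneg α2]
        rw [hα2, ← h]; ring_nf; linarith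
      · nlinarith [sq_nonneg (α1 * (2*t - 1) + α2), hh23]
    linarith
end

section
/- Let x1, x2, x3 ∈ ℝ² and r > 0. Then ‖((1 − t)·x1 + t·x2) − ((1 − t)·x2 + t·x3)‖ ≥ 2r for all t ∈ [0, 1] if and only if there exists α4 ∈ ℝ with 0 ≤ α4 ≤ (1/4)·‖x1 − x3‖² − 4r² such that ((1/4)·‖2x2 − x1 − x3‖² + α4)·((1/4)·‖x1 − x3‖² − 4r² − α4) ≥ ((1/4)·⟨x1 − x3, 2x2 − x1 − x3⟩)², where ⟨·,·⟩ is the Euclidean inner product on ℝ². -/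
open scoped RealInnerProductSpace

/-- Abstract certificate for nonnegativity of a quadratic on `[-1/2, 1/2]`. -/
lemma cert_aux (A B M : ℝ) (hA : 0 ≤ A) :
    (∀ τ : ℝ, -(1/2) ≤ τ → τ ≤ 1/2 → 0 ≤ A*τ^2 + B*τ + M) ↔
    ∃ α : ℝ, 0 ≤ α ∧ α ≤ M ∧ (B/4)^2 ≤ (A/4 + α)*(M - α) := by
  constructor
  · intro h
    have h0 : 0 ≤ M := by nlinarith [h 0 (by norm_num) (by norm_num)]
    have hp : 0 ≤ A/4 + B/2 + M := by nlinarith [h (1/2) (by norm_num) le_rfl]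
    have hm : 0 ≤ A/4 - B/2 + M := by nlinarith [h (-(1/2)) le_rfl (by norm_num)]
    by_cases hc : A ≤ 4*M
    · refine ⟨(4*M - A)/8, by linarith, by linarith, ?_⟩
      nlinarith [mul_nonneg hp hm]
    · push_neg at hc
      have hApos : 0 < A := by linarith
      have hB1 : B ≤ A := by linarith
      have hB2 : -A ≤ B := by linarith
      have hmem1 : -(1/2) ≤ -B/(2*A) := by
        rw [le_div_iff₀ (by linarith)]; linarith
      have hmem2 : -B/(2*A) ≤ 1/2 := by
        rw [div_le_iff₀ (by linarith)]; linarith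
      have hv := h _ hmem1 hmem2
      have hkey : A*(-B/(2*A))^2 + B*(-B/(2*A)) + M = M - B^2/(4*A) := by
        field_simp; ring
      rw [hkey] at hv
      have hd : B^2/(4*A) ≤ M := by linarith
      rw [div_le_iff₀ (by linarith)] at hd
      exact ⟨0, le_rfl, h0, by nlinarith⟩
  · rintro ⟨α, hα0, hαM, hcert⟩
    intro τ hτ1 hτ2
    have hq : (0:ℝ) ≤ (1/2 - τ) * (1/2 + τ) :=
      mul_nonneg (by linarith) (by linarith)
    by_cases hL : A + 4*α = 0
    · have hA0 : A = 0 := by linarith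
      have hα0' : α = 0 := by linarith
      have hB : B = 0 := by nlinarith [sq_nonneg B]
      rw [hA0, hB]; simpa using by linarith
    · have hLpos : 0 < A + 4*α := by
        rcases lt_or_eq_of_le (by linarith : (0:ℝ) ≤ A + 4*α) with h | h
        · exact h
        · exact absurd h.symm hL
      nlinarith [sq_nonneg (2*(A+4*α)*τ + B), mul_nonneg hA hq,
        mul_nonneg hα0 hq, mul_nonneg (mul_nonneg hα0 hα0) hq,
        mul_nonneg hα0 (mul_nonneg hA hq), hcert, hLpos]
/-- Two radius-`r` robots traversing the segments `x1 → x2` and `x2 → x3` at constant speed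
stay collision-free for all `t ∈ [0,1]` iff the time-free certificate
`((1/4)‖2x2−x1−x3‖² + α4)((1/4)‖x1−x3‖² − 4r² − α4) ≥ ((1/4)⟨x1−x3, 2x2−x1−x3⟩)²`
holds for some `α4` with `0 ≤ α4 ≤ (1/4)‖x1−x3‖² − 4r²`. -/
theorem cyclic_move_certificate (x1 x2 x3 : E2) (r : ℝ) (hr : 0 < r) :
    (∀ t ∈ Set.Icc (0 : ℝ) 1,
        2 * r ≤ ‖((1 - t) • x1 + t • x2) - ((1 - t) • x2 + t • x3)‖) ↔
    ∃ α4 : ℝ, 0 ≤ α4 ∧ α4 ≤ (1 / 4) * ‖x1 - x3‖ ^ 2 - 4 * r ^ 2 ∧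
      ((1 / 4) * ⟪x1 - x3, (2 : ℝ) • x2 - x1 - x3⟫) ^ 2 ≤
        ((1 / 4) * ‖(2 : ℝ) • x2 - x1 - x3‖ ^ 2 + α4) *
          ((1 / 4) * ‖x1 - x3‖ ^ 2 - 4 * r ^ 2 - α4) := by
  set s : E2 := (2 : ℝ) • x2 - x1 - x3 with hs
  set w : E2 := x1 - x3 with hw
  have hvec : ∀ t : ℝ, ((1 - t) • x1 + t • x2) - ((1 - t) • x2 + t • x3)
      = (1/2 : ℝ) • w + (t - 1/2) • s := by
    intro t; rw [hs, hw]; module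
  have hnorm : ∀ t : ℝ, ‖((1 - t) • x1 + t • x2) - ((1 - t) • x2 + t • x3)‖^2
      = ‖s‖^2 * (t - 1/2)^2 + ⟪w, s⟫ * (t - 1/2) + (1/4) * ‖w‖^2 := by
    intro t
    rw [hvec t, norm_add_sq_real, norm_smul, norm_smul,
      real_inner_smul_left, real_inner_smul_right, Real.norm_eq_abs, Real.norm_eq_abs]
    rw [mul_pow, mul_pow, sq_abs, sq_abs]
    ring
  have hsq : ∀ t : ℝ, (2 * r ≤ ‖((1 - t) • x1 + t • x2) - ((1 - t) • x2 + t • x3)‖) ↔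
      0 ≤ ‖s‖^2 * (t - 1/2)^2 + ⟪w, s⟫ * (t - 1/2) + ((1/4) * ‖w‖^2 - 4 * r^2) := by
    intro t
    constructor
    · intro h
      have h2 : (2*r)^2 ≤ ‖((1 - t) • x1 + t • x2) - ((1 - t) • x2 + t • x3)‖^2 :=
        pow_le_pow_left₀ (by positivity) h 2
      rw [hnorm t] at h2; nlinarith
    · intro h
      have h2 : (2*r)^2 ≤ ‖((1 - t) • x1 + t • x2) - ((1 - t) • x2 + t • x3)‖^2 := by
        rw [hnorm t]; nlinarith
      exact (abs_le_of_sq_le_sq' h2 (norm_nonneg _)).2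
  have hiff : (∀ t ∈ Set.Icc (0 : ℝ) 1,
        2 * r ≤ ‖((1 - t) • x1 + t • x2) - ((1 - t) • x2 + t • x3)‖) ↔
      (∀ τ : ℝ, -(1/2) ≤ τ → τ ≤ 1/2 →
        0 ≤ ‖s‖^2 * τ^2 + ⟪w, s⟫ * τ + ((1/4) * ‖w‖^2 - 4 * r^2)) := by
    constructor
    · intro h τ h1 h2
      have := (hsq (τ + 1/2)).mp (h (τ + 1/2) ⟨by linarith, by linarith⟩)
      simpa using this
    · intro h t ht
      refine (hsq t).mpr ?_
      have := h (t - 1/2) (by linarith [ht.1]) (by linarith [ht.2])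
      linarith
  rw [hiff, cert_aux _ _ _ (sq_nonneg ‖s‖)]
  constructor
  · rintro ⟨α, h1, h2, h3⟩
    exact ⟨α, h1, h2, by nlinarith⟩
  · rintro ⟨α, h1, h2, h3⟩
    exact ⟨α, h1, h2, by nlinarith⟩
end

section
/- Let r > 0 and let x̄1, x̄2, x̄3 ∈ ℝ² be the vertices of an equilateral triangle of side length ℓ > 0, with corner points x1, x2, x3 defined by the corner-point formula with radius r. Then the collision-free cyclic-move condition — ‖((1 − t)·x_i + t·x_{i+1}) − ((1 − t)·x_{i+1} + t·x_{i+2})‖ ≥ 2r for all t ∈ [0, 1] and all i ∈ {1, 2, 3} with indices taken cyclically mod 3 — holds if and only if ℓ ≥ (2√3 + 4)·r. In particular, the smallest equilateral triangle admitting collision-free cyclic moves of three radius-r robots placed at its corner points has side length (2√3 + 4)·r. -/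
/-- The collision-free cyclic-move condition for three radius-`r` robots moving at constant
speed along `x1 → x2`, `x2 → x3`, `x3 → x1`: all pairwise center distances stay `≥ 2r`. -/
def CyclicFree (r : ℝ) (x1 x2 x3 : E2) : Prop :=
  ∀ t ∈ Set.Icc (0 : ℝ) 1,
    2 * r ≤ ‖((1 - t) • x1 + t • x2) - ((1 - t) • x2 + t • x3)‖ ∧
    2 * r ≤ ‖((1 - t) • x2 + t • x3) - ((1 - t) • x3 + t • x1)‖ ∧
    2 * r ≤ ‖((1 - t) • x3 + t • x1) - ((1 - t) • x1 + t • x2)‖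

open scoped RealInnerProductSpace

lemma cross2_sq (u v : E2) : cross2 u v ^ 2 = ‖u‖^2 * ‖v‖^2 - ⟪u, v⟫^2 := by
  rw [← real_inner_self_eq_norm_sq, ← real_inner_self_eq_norm_sq]
  simp [-real_inner_self_eq_norm_sq, EuclideanSpace.real_norm_sq_eq, cross2, PiLp.inner_apply, RCLike.inner_apply, Fin.sum_univ_two]
  ring

lemma inner_tri {u v : E2} {ℓ : ℝ} (hu : ‖u‖ = ℓ) (hv : ‖v‖ = ℓ) (huv : ‖u - v‖ = ℓ) :
    ⟪u, v⟫ = ℓ^2/2 := by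
  have h := norm_sub_sq_real u v
  rw [hu, hv, huv] at h; linarith

lemma cross_abs {u v : E2} {ℓ : ℝ} (hℓ : 0 < ℓ) (hu : ‖u‖ = ℓ) (hv : ‖v‖ = ℓ)
    (huv : ⟪u, v⟫ = ℓ^2/2) : |cross2 u v| = Real.sqrt 3/2*ℓ^2 := by
  have s3 : Real.sqrt 3 ^ 2 = 3 := Real.sq_sqrt (by norm_num)
  have h := cross2_sq u v
  rw [hu, hv, huv] at h
  have h2 : cross2 u v ^ 2 = (Real.sqrt 3/2*ℓ^2)^2 := by
    rw [h]; nlinarith [s3]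
  rw [← Real.sqrt_sq_eq_abs, h2, Real.sqrt_sq (by positivity)]

lemma wsq {u v : E2} {ℓ : ℝ} (t : ℝ) (hu : ‖u‖ = ℓ) (hv : ‖v‖ = ℓ)
    (huv : ⟪u, v⟫ = -(ℓ^2/2)) :
    ‖(1-t) • u + t • v‖^2 = ℓ^2*(1-3*t+3*t^2) := by
  rw [norm_add_sq_real, norm_smul, norm_smul, real_inner_smul_left, real_inner_smul_right,
    hu, hv, huv, Real.norm_eq_abs, Real.norm_eq_abs, mul_pow, mul_pow, sq_abs, sq_abs]
  ring

set_option maxHeartbeats 1000000 in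
/-- For an equilateral triangle of side length `ℓ > 0`, the cyclic move of three radius-`r`
robots placed at its corner points is collision-free iff `ℓ ≥ (2√3 + 4) r`; in particular
`(2√3 + 4) r` is the smallest side length admitting collision-free cyclic moves. -/
theorem equilateral_cyclic_move_iff (r ℓ : ℝ) (hr : 0 < r) (hℓ : 0 < ℓ)
    (a b c : E2) (hab : dist a b = ℓ) (hbc : dist b c = ℓ) (hca : dist c a = ℓ) :
    CyclicFree r (corner r c a b) (corner r a b c) (corner r b c a) ↔
      (2 * Real.sqrt 3 + 4) * r ≤ ℓ := by
  have s3 : Real.sqrt 3 ^ 2 = 3 := Real.sq_sqrt (by norm_num)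
  have s3pos : 0 < Real.sqrt 3 := Real.sqrt_pos.mpr (by norm_num)
  have s3lt : Real.sqrt 3 < 2 := by nlinarith
  -- norms of edges
  have nab : ‖a - b‖ = ℓ := by rw [← dist_eq_norm]; exact hab
  have nbc : ‖b - c‖ = ℓ := by rw [← dist_eq_norm]; exact hbc
  have nca : ‖c - a‖ = ℓ := by rw [← dist_eq_norm]; exact hca
  have nba : ‖b - a‖ = ℓ := by rw [norm_sub_rev]; exact nab
  have ncb : ‖c - b‖ = ℓ := by rw [norm_sub_rev]; exact nbc
  have nac : ‖a - c‖ = ℓ := by rw [norm_sub_rev]; exact nca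
  -- inner products at each vertex
  have iA : ⟪b - a, c - a⟫ = ℓ^2/2 := inner_tri nba nca (by rw [sub_sub_sub_cancel_right]; exact nbc)
  have iB : ⟪c - b, a - b⟫ = ℓ^2/2 := inner_tri ncb nab (by rw [sub_sub_sub_cancel_right]; exact nca)
  have iC : ⟪a - c, b - c⟫ = ℓ^2/2 := inner_tri nac nbc (by rw [sub_sub_sub_cancel_right]; exact nab)
  -- inner products between consecutive directed edges
  have j1 : ⟪a - b, b - c⟫ = -(ℓ^2/2) := by
    rw [show b - c = -(c - b) from (neg_sub c b).symm, inner_neg_right, real_inner_comm, iB]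
  have j2 : ⟪b - c, c - a⟫ = -(ℓ^2/2) := by
    rw [show c - a = -(a - c) from (neg_sub a c).symm, inner_neg_right, real_inner_comm, iC]
  have j3 : ⟪c - a, a - b⟫ = -(ℓ^2/2) := by
    rw [show a - b = -(b - a) from (neg_sub b a).symm, inner_neg_right, real_inner_comm, iA]
  set k : ℝ := 2*r/(Real.sqrt 3*ℓ) with hk
  -- corner points
  have hsc : r / (Real.sqrt 3/2*ℓ^2) * ℓ = k := by
    rw [hk]; field_simp
  have cornerA : corner r c a b = a + k • ((b - a) + (c - a)) := by
    rw [corner, cross_abs hℓ nba nca iA, nca, nba, ← smul_add, smul_smul, hsc]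
  have cornerB : corner r a b c = b + k • ((c - b) + (a - b)) := by
    rw [corner, cross_abs hℓ ncb nab iB, nab, ncb, ← smul_add, smul_smul, hsc]
  have cornerC : corner r b c a = c + k • ((a - c) + (b - c)) := by
    rw [corner, cross_abs hℓ nac nbc iC, nbc, nac, ← smul_add, smul_smul, hsc]
  set d : ℝ := ℓ - 2*Real.sqrt 3*r with hd
  have hkl : (1 - 3*k)*ℓ = d := by
    rw [hk, hd]; field_simp; linear_combination (2*r)*s3
  -- squared distance along the motion
  have pairsq : ∀ (u v : E2) (t : ℝ), ‖u‖ = ℓ → ‖v‖ = ℓ → ⟪u, v⟫ = -(ℓ^2/2) →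
      ‖(1 - 3*k) • ((1-t) • u + t • v)‖^2 = d^2*(1-3*t+3*t^2) := by
    intro u v t hu hv huv
    rw [norm_smul, Real.norm_eq_abs, mul_pow, sq_abs, wsq t hu hv huv, ← hkl]
    ring
  have e1 : ∀ t : ℝ, ((1-t) • (corner r c a b) + t • (corner r a b c))
      - ((1-t) • (corner r a b c) + t • (corner r b c a))
      = (1 - 3*k) • ((1-t) • (a - b) + t • (b - c)) := by
    intro t; rw [cornerA, cornerB, cornerC]; module
  have e2 : ∀ t : ℝ, ((1-t) • (corner r a b c) + t • (corner r b c a))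
      - ((1-t) • (corner r b c a) + t • (corner r c a b))
      = (1 - 3*k) • ((1-t) • (b - c) + t • (c - a)) := by
    intro t; rw [cornerA, cornerB, cornerC]; module
  have e3 : ∀ t : ℝ, ((1-t) • (corner r b c a) + t • (corner r c a b))
      - ((1-t) • (corner r c a b) + t • (corner r a b c))
      = (1 - 3*k) • ((1-t) • (c - a) + t • (a - b)) := by
    intro t; rw [cornerA, cornerB, cornerC]; module
  constructor
  · intro H
    obtain ⟨h1, -, -⟩ := H (1/2) (by norm_num)
    rw [e1] at h1
    have hsq : (2*r)^2 ≤ ‖(1 - 3*k) • ((1-(1/2):ℝ) • (a - b) + (1/2 : ℝ) • (b - c))‖^2 :=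
      pow_le_pow_left₀ (by linarith) h1 2
    rw [pairsq _ _ _ nab nbc j1] at hsq
    have hdgt : -(4*r) < d := by rw [hd]; nlinarith
    have h16 : 16*r^2 ≤ d^2 := by nlinarith
    have hd4 : 4*r ≤ d := by nlinarith
    rw [hd] at hd4; linarith
  · intro hge t ht
    have hd4 : 4*r ≤ d := by rw [hd]; linarith
    have hq : (1:ℝ)/4 ≤ 1-3*t+3*t^2 := by nlinarith [sq_nonneg (2*t-1)]
    have hd2 : 16*r^2 ≤ d^2 := by nlinarith
    have main : ∀ (u v : E2), ‖u‖ = ℓ → ‖v‖ = ℓ → ⟪u, v⟫ = -(ℓ^2/2) →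
        2*r ≤ ‖(1 - 3*k) • ((1-t) • u + t • v)‖ := by
      intro u v hu hv huv
      apply le_of_pow_le_pow_left₀ two_ne_zero (norm_nonneg _)
      rw [pairsq _ _ _ hu hv huv]
      nlinarith [mul_le_mul_of_nonneg_left hq (sq_nonneg d)]
    exact ⟨by rw [e1]; exact main _ _ nab nbc j1,
           by rw [e2]; exact main _ _ nbc nca j2,
           by rw [e3]; exact main _ _ nca nab j3⟩
end

section
/- Let r > 0 and x1, x2, x3 ∈ ℝ² satisfy the collision-free cyclic-move condition: ‖((1 − t)·x_i + t·x_{i+1}) − ((1 − t)·x_{i+1} + t·x_{i+2})‖ ≥ 2r for all t ∈ [0, 1] and all i ∈ {1, 2, 3}, indices mod 3. Then for every pair of distinct indices i, j ∈ {1, 2, 3} with remaining index k, one has ‖((1 − t)·x_j + t·x_i) − x_k‖ ≥ 2r for all t ∈ [0, 1]; i.e. a robot moving in a straight line from x_j to the vacant position x_i never comes within distance 2r of the stationary robot at x_k, so vacant moves along loop edges are collision-free. -/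
lemma key_scale (r : ℝ) (hr : 0 ≤ r) (a b : E2)
    (h : ∀ s ∈ Set.Icc (0:ℝ) 1, 2 * r ≤ ‖(1 - s) • a + s • b‖) :
    ∀ t ∈ Set.Icc (0:ℝ) 1, 2 * r ≤ ‖t • a + b‖ := by
  rintro t ⟨ht0, ht1⟩
  have h1 : (0:ℝ) < 1 + t := by linarith
  have hs : (1 : ℝ)/(1+t) ∈ Set.Icc (0:ℝ) 1 := by
    constructor
    · positivity
    · rw [div_le_one h1]; linarith
  have hh := h (1/(1+t)) hs
  have heq : (1 - 1/(1+t)) • a + (1/(1+t)) • b = (1/(1+t)) • (t • a + b) := by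
    rw [smul_add, smul_smul]
    congr 2
    field_simp
    ring
  rw [heq, norm_smul] at hh
  have h2 : 2*r ≤ 1/(1+t) * ‖t • a + b‖ := by
    simpa [abs_of_pos h1] using hh
  rw [div_mul_eq_mul_div, le_div_iff₀ h1] at h2
  have hn : 0 ≤ ‖t • a + b‖ := norm_nonneg _
  nlinarith

lemma aux3 (r : ℝ) (hr : 0 ≤ r) (x : Fin 3 → E2)
    (hcyc : ∀ i : Fin 3, ∀ s ∈ Set.Icc (0:ℝ) 1,
      2*r ≤ ‖((1-s) • x i + s • x (i+1)) - ((1-s) • x (i+1) + s • x (i+2))‖)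
    (k : Fin 3) :
    ∀ t ∈ Set.Icc (0:ℝ) 1,
      2*r ≤ ‖t • (x (k+1) - x (k+2)) + (x (k+2) - x k)‖ := by
  apply key_scale r hr
  intro s hs
  have hh := hcyc (k+1) s hs
  have e1 : (k+1)+1 = k+2 := by simp [Fin.ext_iff, Fin.add_def]
  have e2 : (k+1)+2 = k := by simp [Fin.ext_iff, Fin.add_def]; omega
  rw [e1, e2] at hh
  have e : ((1-s) • x (k+1) + s • x (k+2)) - ((1-s) • x (k+2) + s • x k)
      = (1-s) • (x (k+1) - x (k+2)) + s • (x (k+2) - x k) := by module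
  rw [e] at hh
  exact hh

set_option maxHeartbeats 1000000 in
/-- If three radius-`r` robots at `x 0, x 1, x 2` satisfy the collision-free cyclic-move
condition (all pairwise center distances stay `≥ 2r` while moving at constant speed along
`x i → x (i+1)`, indices mod 3), then any robot moving in a straight line from `x j` to the
vacant position `x i` stays at distance `≥ 2r` from the stationary robot at `x k`:
vacant moves along loop edges are collision-free. -/
theorem vacant_move_along_loop_edge_collision_free (r : ℝ) (hr : 0 < r) (x : Fin 3 → E2)
    (hcyc : ∀ i : Fin 3, ∀ t ∈ Set.Icc (0 : ℝ) 1,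
      2 * r ≤ ‖((1 - t) • x i + t • x (i + 1)) - ((1 - t) • x (i + 1) + t • x (i + 2))‖)
    (i j k : Fin 3) (hij : i ≠ j) (hki : k ≠ i) (hkj : k ≠ j) :
    ∀ t ∈ Set.Icc (0 : ℝ) 1, 2 * r ≤ ‖((1 - t) • x j + t • x i) - x k‖ := by
  rintro t ⟨ht0, ht1⟩
  have hr' : 0 ≤ r := hr.le
  have hcase : (i = k+1 ∧ j = k+2) ∨ (i = k+2 ∧ j = k+1) := by
    fin_cases i <;> fin_cases j <;> fin_cases k <;> simp_all
  rcases hcase with ⟨hi, hj⟩ | ⟨hi, hj⟩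
  · subst hi; subst hj
    have hh := aux3 r hr' x hcyc k t ⟨ht0, ht1⟩
    have e : ((1-t) • x (k+2) + t • x (k+1)) - x k
        = t • (x (k+1) - x (k+2)) + (x (k+2) - x k) := by module
    rw [e]; exact hh
  · subst hi; subst hj
    have hh := aux3 r hr' x hcyc k (1-t) ⟨by linarith, by linarith⟩
    have e : ((1-t) • x (k+1) + t • x (k+2)) - x k
        = (1-t) • (x (k+1) - x (k+2)) + (x (k+2) - x k) := by module
    rw [e]; exact hh
end
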